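/- arXiv:1505.00486 — 8 statements merged into one kernel-verified Lean document; each statement's English description precedes it below -/
import Mathlib

section
/- Let G be a finite group, P a subgroup of G, and z a central element of G not contained in P. Then for every irreducible complex character ψ of P, the induced character Ind_P^G ψ is reducible. -/
open scoped Classical

/-- A function `χ : G → ℂ` is an irreducible character if it is the character of a simple
finite-dimensional complex representation of `G`. -/
def IsIrrChar {G : Type} [Group G] (χ : G → ℂ) : Prop :=
  ∃ V : FDRep ℂ G, CategoryTheory.Simple V ∧ V.character = χ

/-- The character of `G` induced from a class function `ψ` on a subgroup `P ≤ G`. -/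
noncomputable def indChar {G : Type} [Group G] [Fintype G] (P : Subgroup G) (ψ : P → ℂ) :
    G → ℂ := fun g =>
  (Nat.card P : ℂ)⁻¹ * ∑ x : G, if h : x⁻¹ * g * x ∈ P then ψ ⟨x⁻¹ * g * x, h⟩ else 0

/-- If `G` is a finite group, `P ≤ G` a subgroup and `z` a central element of `G` not
contained in `P`, then for every irreducible character `ψ` of `P` the induced character
`Ind_P^G ψ` is reducible. -/
theorem induced_reducible_of_central_not_mem
    {G : Type} [Group G] [Fintype G] (P : Subgroup G)
    (z : G) (hz : z ∈ Subgroup.center G) (hzP : z ∉ P)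
    (ψ : P → ℂ) (hψ : IsIrrChar ψ) :
    ¬ IsIrrChar (indChar P ψ) := by
  rintro ⟨V, hS, hchar⟩
  haveI := hS
  -- the induced character vanishes at z
  have hzero : indChar P ψ z = 0 := by
    unfold indChar
    have hterm : ∀ x : G, (if h : x⁻¹ * z * x ∈ P then ψ ⟨x⁻¹ * z * x, h⟩ else 0) = 0 := by
      intro x
      have hx : x⁻¹ * z * x = z := by
        rw [mul_assoc, ← (Subgroup.mem_center_iff.mp hz x), ← mul_assoc, inv_mul_cancel, one_mul]
      rw [dif_neg]
      rw [hx]; exact hzP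
    simp [hterm]
  have hVz : V.character z = 0 := by rw [hchar]; exact hzero
  -- the endomorphism given by the action of z
  have hcomm : ∀ g : G, (show G from g) * z = z * (show G from g) :=
    fun g => Subgroup.mem_center_iff.mp hz _
  let f : V ⟶ V := Action.Hom.mk (Action.ρ V z) (fun g => by
    have h2 : (Action.ρ V z) * (Action.ρ V (show G from g)) = (Action.ρ V (show G from g)) * (Action.ρ V z) := by
      rw [← map_mul, ← map_mul, hcomm]
    exact h2)
  obtain ⟨c, hc⟩ := CategoryTheory.endomorphism_simple_eq_smul_id ℂ f
  have hc' : V.ρ z = c • (LinearMap.id : V →ₗ[ℂ] V) := by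
    have := congrArg (fun φ : V ⟶ V => φ.hom.hom.hom) hc
    refine this.symm.trans ?_
    ext v
    rfl
  -- trace computation
  have htr : V.character z = c * (Module.finrank ℂ V : ℂ) := by
    show LinearMap.trace ℂ V (V.ρ z) = _
    rw [hc', map_smul, LinearMap.trace_id, smul_eq_mul]
  rw [hVz] at htr
  -- derive that V is subsingleton, in either case
  have hsub : Subsingleton V := by
    rcases mul_eq_zero.mp htr.symm with hc0 | hd0
    · subst hc0
      refine subsingleton_of_forall_eq 0 (fun v => ?_)
      have h1 : (V.ρ z) ((V.ρ z⁻¹) v) = v := by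
        rw [← Module.End.mul_apply, ← map_mul, mul_inv_cancel, map_one, Module.End.one_apply]
      rw [hc', zero_smul] at h1
      simpa using h1.symm
    · have : Module.finrank ℂ V = 0 := by exact_mod_cast hd0
      exact Module.finrank_zero_iff.mp this
  have hid : CategoryTheory.CategoryStruct.id V = 0 := by
    apply Action.hom_ext
    apply CategoryTheory.ObjectProperty.hom_ext
    apply ModuleCat.hom_ext
    apply LinearMap.ext
    intro v
    exact @Subsingleton.elim _ hsub _ _
  exact CategoryTheory.id_nonzero V hid
end

section
/- Let n ≥ 2 and let S_k × S_{n-k} be a Young subgroup of the symmetric group S_n with 1 ≤ k ≤ n-1. Then for every irreducible character ψ of S_k × S_{n-k}, the induced character Ind_{S_k × S_{n-k}}^{S_n} ψ is reducible. -/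
open scoped Classical
open CategoryTheory Representation Module

noncomputable section Helpers


open scoped Classical
open CategoryTheory Representation Module

noncomputable section Helpers

/-- sum of χ(g)χ(g⁻¹) for a simple rep equals |H|. -/
lemma sum_char_self {H : Type} [Group H] [Fintype H] (V : FDRep ℂ H) (hs : Simple V) :
    ∑ g : H, V.character g * V.character g⁻¹ = (Fintype.card H : ℂ) := by
  haveI : Invertible (Fintype.card H : ℂ) :=
    invertibleOfNonzero (by exact_mod_cast Fintype.card_ne_zero)
  haveI : Invertible (Nat.card H : ℂ) := by
    rw [Nat.card_eq_fintype_card]; infer_instance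
  have h := FDRep.char_orthonormal (k := ℂ) (G := H) V V
  rw [if_pos ⟨Iso.refl _⟩, Nat.card_eq_fintype_card,
    inv_mul_eq_one₀ (by exact_mod_cast (Fintype.card_ne_zero (α := H)))] at h
  exact h.symm

lemma nontrivial_of_simple {H : Type} [Group H] [Fintype H] (V : FDRep ℂ H) (hs : Simple V) :
    Nontrivial V := by
  by_contra hn
  rw [not_nontrivial_iff_subsingleton] at hn
  have h := sum_char_self V hs
  have hz : ∀ g : H, V.character g = 0 := by
    intro g
    have : V.ρ g = 0 := LinearMap.ext fun x => Subsingleton.elim _ _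
    simp [FDRep.character, this]
  rw [Finset.sum_congr rfl (fun g _ => by rw [hz g, zero_mul]),
    Finset.sum_const_zero] at h
  exact (Nat.cast_ne_zero (R := ℂ)).mpr Fintype.card_ne_zero h.symm


/-- The Mackey term `T z = ∑_h f(h) f(z⁻¹h⁻¹z)` equals `|H_z| * m` for a natural number `m`,
which is positive when conjugation by `z` is trivial on `H_z` and `V` is nontrivial. -/
lemma T_exists {G : Type} [Group G] [Fintype G] (P : Subgroup G) (V : FDRep ℂ ↥P) (z : G) :
    ∃ c m : ℕ, 0 < c ∧
      (∑ h : G, (if hm : h ∈ P then V.character ⟨h, hm⟩ else 0) *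
        (if hm : z⁻¹ * h⁻¹ * z ∈ P then V.character ⟨z⁻¹ * h⁻¹ * z, hm⟩ else 0)) = (c : ℂ) * m ∧
      ((∀ h : G, h ∈ P → z⁻¹ * h * z ∈ P → z⁻¹ * h * z = h) → Nontrivial V → 0 < m) := by
  -- the subgroup H_z = P ∩ z P z⁻¹
  set H : Subgroup G :=
    { carrier := {h | h ∈ P ∧ z⁻¹ * h * z ∈ P}
      one_mem' := ⟨one_mem P, by simpa using one_mem P⟩
      mul_mem' := by
        rintro a b ⟨ha1, ha2⟩ ⟨hb1, hb2⟩
        refine ⟨mul_mem ha1 hb1, ?_⟩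
        have : z⁻¹ * (a * b) * z = (z⁻¹ * a * z) * (z⁻¹ * b * z) := by group
        rw [this]; exact mul_mem ha2 hb2
      inv_mem' := by
        rintro a ⟨ha1, ha2⟩
        refine ⟨inv_mem ha1, ?_⟩
        have : z⁻¹ * a⁻¹ * z = (z⁻¹ * a * z)⁻¹ := by group
        rw [this]; exact inv_mem ha2 } with hH
  have memH : ∀ h : G, h ∈ H ↔ h ∈ P ∧ z⁻¹ * h * z ∈ P := fun h => Iff.rfl
  -- the two embeddings of H into P
  let ι : ↥H →* ↥P :=
    { toFun := fun h => ⟨h.1, h.2.1⟩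
      map_one' := rfl
      map_mul' := fun _ _ => rfl }
  let κ : ↥H →* ↥P :=
    { toFun := fun h => ⟨z⁻¹ * h.1 * z, h.2.2⟩
      map_one' := by ext; simp
      map_mul' := fun a b => by ext; simp; group }
  let A : FDRep ℂ ↥H := FDRep.of (V.ρ.comp ι)
  let B : FDRep ℂ ↥H := FDRep.of (V.ρ.comp κ)
  have hA : ∀ h : ↥H, A.character h = V.character (ι h) := fun h => rfl
  have hB : ∀ h : ↥H, B.character h = V.character (κ h) := fun h => rfl
  -- rewrite the sum as a sum over H
  have step1 : (∑ h : G, (if hm : h ∈ P then V.character ⟨h, hm⟩ else 0) *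
        (if hm : z⁻¹ * h⁻¹ * z ∈ P then V.character ⟨z⁻¹ * h⁻¹ * z, hm⟩ else 0)) =
      ∑ h : ↥H, A.character h * B.character h⁻¹ := by
    have hvanish : ∀ x ∈ Finset.univ (α := G),
        (if hm : x ∈ P then V.character ⟨x, hm⟩ else 0) *
          (if hm : z⁻¹ * x⁻¹ * z ∈ P then V.character ⟨z⁻¹ * x⁻¹ * z, hm⟩ else 0) ≠ 0 →
        x ∈ H := by
      intro x _ hx
      by_contra hmem
      rw [memH] at hmem
      push_neg at hmem
      by_cases h1 : x ∈ P
      · have h2 := hmem h1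
        have : ¬ (z⁻¹ * x⁻¹ * z ∈ P) := by
          intro hc
          apply h2
          have : z⁻¹ * x * z = (z⁻¹ * x⁻¹ * z)⁻¹ := by group
          rw [this]; exact inv_mem hc
        rw [dif_neg this, mul_zero] at hx
        exact hx rfl
      · rw [dif_neg h1, zero_mul] at hx
        exact hx rfl
    rw [← Finset.sum_filter_of_ne hvanish]
    rw [Finset.sum_subtype (Finset.univ.filter (· ∈ H))
        (p := (· ∈ H)) (by simp)]
    refine Finset.sum_congr rfl fun h _ => ?_
    have h1 : (h : G) ∈ P := h.2.1
    have h2 : z⁻¹ * (h : G)⁻¹ * z ∈ P := by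
      have : z⁻¹ * (h:G)⁻¹ * z = (z⁻¹ * (h:G) * z)⁻¹ := by group
      rw [this]; exact inv_mem h.2.2
    rw [dif_pos h1, dif_pos h2, hA, hB]
    rfl
  letI : Invertible ((Fintype.card ↥H : ℂ)) :=
    invertibleOfNonzero (by exact_mod_cast Fintype.card_ne_zero)
  refine ⟨Fintype.card ↥H, finrank ℂ (invariants (linHom B.ρ A.ρ)), Fintype.card_pos, ?_, ?_⟩
  · rw [step1]
    have step2 : ∑ h : ↥H, A.character h * B.character h⁻¹ =
        ∑ h : ↥H, (FDRep.of (linHom B.ρ A.ρ)).character h := by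
      refine Finset.sum_congr rfl fun h _ => ?_
      rw [FDRep.char_linHom, mul_comm]
    rw [step2]
    have havg := FDRep.average_char_eq_finrank_invariants (FDRep.of (linHom B.ρ A.ρ))
    rw [Nat.card_eq_fintype_card] at havg
    have hcne : ((Fintype.card ↥H : ℂ)) ≠ 0 := by exact_mod_cast Fintype.card_ne_zero
    rw [inv_mul_eq_iff_eq_mul₀ hcne] at havg
    rw [havg]
    rfl
  · intro hconj hnt
    have hκ : ∀ h : ↥H, κ h = ι h := fun h => Subtype.ext (hconj h h.2.1 h.2.2)
    refine Module.finrank_pos_iff.mpr ?_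
    refine ⟨⟨LinearMap.id, ?_⟩, 0, ?_⟩
    · rw [mem_invariants]
      intro g
      rw [linHom_apply]
      have hAρ : A.ρ g = V.ρ (ι g) := rfl
      have hBρ : B.ρ g⁻¹ = V.ρ (κ g⁻¹) := rfl
      rw [hAρ, hBρ, map_inv κ, hκ g, LinearMap.id_comp, ← Module.End.mul_eq_comp,
        ← map_mul V.ρ, mul_inv_cancel, map_one, Module.End.one_eq_id]
    · intro hc
      rw [Submodule.mk_eq_zero] at hc
      obtain ⟨x, hx⟩ := exists_ne (0 : V)
      apply hx
      rw [← LinearMap.id_apply (R := ℂ) x, hc]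
      rfl



lemma T_mem {G : Type} [Group G] [Fintype G] (P : Subgroup G) (V : FDRep ℂ ↥P)
    (hs : Simple V) {z : G} (hz : z ∈ P) :
    (∑ h : G, (if hm : h ∈ P then V.character ⟨h, hm⟩ else 0) *
      (if hm : z⁻¹ * h⁻¹ * z ∈ P then V.character ⟨z⁻¹ * h⁻¹ * z, hm⟩ else 0)) =
      (Fintype.card ↥P : ℂ) := by
  have hvanish : ∀ x ∈ Finset.univ (α := G),
      (if hm : x ∈ P then V.character ⟨x, hm⟩ else 0) *
        (if hm : z⁻¹ * x⁻¹ * z ∈ P then V.character ⟨z⁻¹ * x⁻¹ * z, hm⟩ else 0) ≠ 0 →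
      x ∈ P := by
    intro x _ hx
    by_contra h1
    rw [dif_neg h1, zero_mul] at hx
    exact hx rfl
  rw [← Finset.sum_filter_of_ne hvanish,
    Finset.sum_subtype (Finset.univ.filter (· ∈ P)) (p := (· ∈ P)) (by simp)]
  have step : ∀ h : ↥P,
      (if hm : (h : G) ∈ P then V.character ⟨(h : G), hm⟩ else 0) *
        (if hm : z⁻¹ * (h : G)⁻¹ * z ∈ P then V.character ⟨z⁻¹ * (h : G)⁻¹ * z, hm⟩ else 0) =
      V.character h * V.character h⁻¹ := by
    intro h
    have h1 : (h : G) ∈ P := h.2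
    have h2 : z⁻¹ * (h : G)⁻¹ * z ∈ P :=
      mul_mem (mul_mem (inv_mem hz) (inv_mem h1)) hz
    rw [dif_pos h1, dif_pos h2]
    have e1 : (⟨(h : G), h1⟩ : ↥P) = h := rfl
    have e2 : (⟨z⁻¹ * (h : G)⁻¹ * z, h2⟩ : ↥P) =
        (⟨z, hz⟩ : ↥P)⁻¹ * h⁻¹ * ((⟨z, hz⟩ : ↥P)⁻¹)⁻¹ := by
      apply Subtype.ext
      simp
    rw [e1, e2, FDRep.char_conj]
  rw [Finset.sum_congr rfl (fun h _ => step h)]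
  exact sum_char_self V hs


open Equiv

lemma swap_notin_range {α β : Type} [DecidableEq α] [DecidableEq β] (a : α) (b : β) :
    Equiv.swap (Sum.inl a) (Sum.inr b) ∉ (Equiv.Perm.sumCongrHom α β).range := by
  rintro ⟨⟨σ, τ⟩, hp⟩
  have := Equiv.congr_fun hp (Sum.inl a)
  simp [Equiv.swap_apply_left] at this

lemma conj_swap_eq {α β : Type} [DecidableEq α] [DecidableEq β] (a : α) (b : β)
    (h : Equiv.Perm (α ⊕ β))
    (hP : h ∈ (Equiv.Perm.sumCongrHom α β).range)
    (hc : (Equiv.swap (Sum.inl a) (Sum.inr b))⁻¹ * h * Equiv.swap (Sum.inl a) (Sum.inr b) ∈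
      (Equiv.Perm.sumCongrHom α β).range) :
    (Equiv.swap (Sum.inl a) (Sum.inr b))⁻¹ * h * Equiv.swap (Sum.inl a) (Sum.inr b) = h := by
  set t : Equiv.Perm (α ⊕ β) := Equiv.swap (Sum.inl a) (Sum.inr b) with ht
  have htinv : t⁻¹ = t := Equiv.swap_inv _ _
  rw [htinv] at hc ⊢
  obtain ⟨⟨σ, τ⟩, rfl⟩ := hP
  obtain ⟨⟨σ', τ'⟩, hq⟩ := hc
  have hta : t (Sum.inl a) = Sum.inr b := Equiv.swap_apply_left _ _
  have htb : t (Sum.inr b) = Sum.inl a := Equiv.swap_apply_right _ _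
  have hσ : σ a = a := by
    by_contra hne
    have hx := Equiv.congr_fun hq (Sum.inr b)
    rw [Equiv.Perm.mul_apply, Equiv.Perm.mul_apply] at hx
    rw [htb] at hx
    simp only [Equiv.Perm.sumCongrHom_apply, Equiv.sumCongr_apply, Sum.map_inl,
      Sum.map_inr] at hx
    rw [Equiv.swap_apply_of_ne_of_ne (by simp [hne]) (by simp)] at hx
    simp at hx
  have hτ : τ b = b := by
    by_contra hne
    have hx := Equiv.congr_fun hq (Sum.inl a)
    rw [Equiv.Perm.mul_apply, Equiv.Perm.mul_apply] at hx
    rw [hta] at hx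
    simp only [Equiv.Perm.sumCongrHom_apply, Equiv.sumCongr_apply, Sum.map_inl,
      Sum.map_inr] at hx
    rw [Equiv.swap_apply_of_ne_of_ne (by simp) (by simp [hne])] at hx
    simp at hx
  apply Equiv.ext
  intro x
  rw [Equiv.Perm.mul_apply, Equiv.Perm.mul_apply]
  rcases x with x | x
  · by_cases hxa : x = a
    · subst hxa
      rw [hta]
      simp only [Equiv.Perm.sumCongrHom_apply, Equiv.sumCongr_apply, Sum.map_inl,
        Sum.map_inr, hτ, hσ]
      rw [htb]
    · have h1 : t (Sum.inl x) = Sum.inl x :=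
        Equiv.swap_apply_of_ne_of_ne (by simp [hxa]) (by simp)
      rw [h1]
      simp only [Equiv.Perm.sumCongrHom_apply, Equiv.sumCongr_apply, Sum.map_inl]
      have hσx : σ x ≠ a := fun hcon => hxa (σ.injective (by rw [hcon, hσ]))
      exact Equiv.swap_apply_of_ne_of_ne (by simp [hσx]) (by simp)
  · by_cases hxb : x = b
    · subst hxb
      rw [htb]
      simp only [Equiv.Perm.sumCongrHom_apply, Equiv.sumCongr_apply, Sum.map_inl,
        Sum.map_inr, hσ, hτ]
      rw [hta]
    · have h1 : t (Sum.inr x) = Sum.inr x :=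
        Equiv.swap_apply_of_ne_of_ne (by simp) (by simp [hxb])
      rw [h1]
      simp only [Equiv.Perm.sumCongrHom_apply, Equiv.sumCongr_apply, Sum.map_inr]
      have hτx : τ x ≠ b := fun hcon => hxb (τ.injective (by rw [hcon, hτ]))
      exact Equiv.swap_apply_of_ne_of_ne (by simp) (by simp [hτx])

end Helpers

/-- Generic key lemma: if `U` is simple with character induced from the character of a
simple rep `V` of `P`, and there is `t ∉ P` whose conjugation action is trivial on
`P ∩ t P t⁻¹`, we get a contradiction. -/
lemma induced_not_simple_aux {G : Type} [Group G] [Fintype G] (P : Subgroup G)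
    (V : FDRep ℂ ↥P) (hVs : CategoryTheory.Simple V)
    (U : FDRep ℂ G) (hUs : CategoryTheory.Simple U)
    (hUc : U.character = indChar P V.character)
    (t : G) (htP : t ∉ P)
    (hconj : ∀ h : G, h ∈ P → t⁻¹ * h * t ∈ P → t⁻¹ * h * t = h) : False := by
  set f : G → ℂ := fun y => if hy : y ∈ P then V.character ⟨y, hy⟩ else 0 with hfdef
  set T : G → ℂ := fun z => ∑ h, f h * f (z⁻¹ * h⁻¹ * z) with hTdef
  set q : ℂ := (Nat.card ↥P : ℂ)⁻¹ with hqdef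
  have hNcard : (Nat.card ↥P) = Fintype.card ↥P := Nat.card_eq_fintype_card
  have hPne : (Nat.card ↥P : ℂ) ≠ 0 := by
    rw [hNcard]; exact_mod_cast Fintype.card_ne_zero
  have hGne : ((Fintype.card G) : ℂ) ≠ 0 := by exact_mod_cast Fintype.card_ne_zero
  have hUsum : ∑ g, U.character g * U.character g⁻¹ = ((Fintype.card G) : ℂ) :=
    sum_char_self U hUs
  have hind : ∀ g, U.character g = q * ∑ x, f (x⁻¹ * g * x) := by
    intro g; rw [hUc]; rfl
  have inner : ∀ x : G,
      (∑ g, ∑ y, f (x⁻¹ * g * x) * f (y⁻¹ * g⁻¹ * y)) = ∑ z, T z := by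
    intro x
    have step1 : (∑ g, ∑ y, f g * f (y⁻¹ * (x * g⁻¹ * x⁻¹) * y)) =
        ∑ g, ∑ y, f (x⁻¹ * g * x) * f (y⁻¹ * g⁻¹ * y) := by
      refine Fintype.sum_bijective (fun g => x * g * x⁻¹)
        ((MulAut.conj x).bijective) _ _ (fun g => ?_)
      refine Finset.sum_congr rfl fun y _ => ?_
      have e1 : x⁻¹ * (x * g * x⁻¹) * x = g := by group
      have e2 : y⁻¹ * (x * g * x⁻¹)⁻¹ * y = y⁻¹ * (x * g⁻¹ * x⁻¹) * y := by group
      rw [e1, e2]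
    rw [← step1]
    have step2 : ∀ g : G,
        (∑ y, f g * f (y⁻¹ * (x * g⁻¹ * x⁻¹) * y)) = ∑ z, f g * f (z⁻¹ * g⁻¹ * z) := by
      intro g
      refine (Fintype.sum_bijective (fun z => x * z)
        (Group.mulLeft_bijective x) _ _ (fun z => ?_)).symm
      have e3 : (x * z)⁻¹ * (x * g⁻¹ * x⁻¹) * (x * z) = z⁻¹ * g⁻¹ * z := by group
      rw [e3]
    rw [Finset.sum_congr rfl (fun g _ => step2 g), Finset.sum_comm]
  have keysum : ∑ g, U.character g * U.character g⁻¹ =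
      q * q * (((Fintype.card G) : ℂ) * ∑ z, T z) := by
    calc ∑ g, U.character g * U.character g⁻¹
        = ∑ g, (q * ∑ x, f (x⁻¹ * g * x)) * (q * ∑ y, f (y⁻¹ * g⁻¹ * y)) :=
          Finset.sum_congr rfl fun g _ => by rw [hind g, hind g⁻¹]
      _ = q * q * ∑ g, ∑ x, ∑ y, f (x⁻¹ * g * x) * f (y⁻¹ * g⁻¹ * y) := by
          rw [Finset.mul_sum]
          refine Finset.sum_congr rfl fun g _ => ?_
          rw [mul_mul_mul_comm, Finset.sum_mul_sum]
      _ = q * q * ∑ x, ∑ g, ∑ y, f (x⁻¹ * g * x) * f (y⁻¹ * g⁻¹ * y) := by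
          rw [Finset.sum_comm]
      _ = q * q * ∑ _x : G, ∑ z, T z := by
          rw [Finset.sum_congr rfl (fun x _ => inner x)]
      _ = q * q * (((Fintype.card G) : ℂ) * ∑ z, T z) := by
          rw [Finset.sum_const, Finset.card_univ, nsmul_eq_mul]
  have hSig : ∑ z, T z = ((Nat.card ↥P : ℂ)) ^ 2 := by
    have h1 : q * q * (((Fintype.card G) : ℂ) * ∑ z, T z) = ((Fintype.card G) : ℂ) := by
      rw [← keysum, hUsum]
    have h2 : (q * q * ∑ z, T z) * ((Fintype.card G) : ℂ) =
        1 * ((Fintype.card G) : ℂ) := by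
      rw [one_mul]; linear_combination h1
    have h3 : q * q * ∑ z, T z = 1 := mul_right_cancel₀ hGne h2
    rw [hqdef] at h3
    field_simp at h3
    rw [hNcard] at h3 ⊢
    linear_combination h3
  have hre : ∑ z, (T z).re = ((Nat.card ↥P : ℝ)) ^ 2 := by
    have h := congrArg Complex.re hSig
    rw [Complex.re_sum] at h
    rw [h, show ((Nat.card ↥P : ℂ)) ^ 2 = (((((Nat.card ↥P : ℝ)) ^ 2 : ℝ)) : ℂ) by
      push_cast; ring, Complex.ofReal_re]
  have hTnonneg : ∀ z, 0 ≤ (T z).re := by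
    intro z
    obtain ⟨c, m, _, heq, _⟩ := T_exists P V z
    have hTz : T z = ((c * m : ℕ) : ℂ) := by rw [hTdef]; push_cast; exact heq
    rw [hTz, Complex.natCast_re]
    positivity
  have hTmem : ∀ z ∈ P, (T z).re = (Fintype.card ↥P : ℝ) := by
    intro z hz
    have hTz : T z = ((Fintype.card ↥P : ℕ) : ℂ) := T_mem P V hVs hz
    rw [hTz, Complex.natCast_re]
  have hTt : 1 ≤ (T t).re := by
    obtain ⟨c, m, hc, heq, hpos⟩ := T_exists P V t
    have hm : 0 < m := hpos hconj (nontrivial_of_simple V hVs)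
    have hTz : T t = ((c * m : ℕ) : ℂ) := by rw [hTdef]; push_cast; exact heq
    rw [hTz, Complex.natCast_re]
    exact_mod_cast Nat.one_le_iff_ne_zero.mpr (Nat.mul_ne_zero hc.ne' hm.ne')
  have hsubset : insert t (Finset.univ.filter (· ∈ P)) ⊆ Finset.univ := by
    intro x _; exact Finset.mem_univ x
  have hlow : ∑ z ∈ insert t (Finset.univ.filter (· ∈ P)), (T z).re ≤ ∑ z, (T z).re :=
    Finset.sum_le_sum_of_subset_of_nonneg hsubset (fun z _ _ => hTnonneg z)
  have htnotmem : t ∉ Finset.univ.filter (· ∈ P) := by simp [htP]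
  rw [Finset.sum_insert htnotmem] at hlow
  have hfiltval : ∑ z ∈ Finset.univ.filter (· ∈ P), (T z).re =
      (Fintype.card ↥P : ℝ) * (Fintype.card ↥P : ℝ) := by
    rw [Finset.sum_congr rfl (fun z hz => hTmem z (Finset.mem_filter.mp hz).2),
      Finset.sum_const, ← Fintype.card_subtype, nsmul_eq_mul]
  rw [hfiltval, hre] at hlow
  have hsq : ((Nat.card ↥P : ℝ)) ^ 2 = (Fintype.card ↥P : ℝ) * (Fintype.card ↥P : ℝ) := by
    rw [hNcard]; ring
  rw [hsq] at hlow
  linarith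

/-- For `n ≥ 2` and `1 ≤ k ≤ n - 1`, every character of the symmetric group `S_n`
(realized as permutations of `Fin k ⊕ Fin (n-k)`) induced from an irreducible character of
the Young subgroup `S_k × S_{n-k}` is reducible. -/
theorem induced_from_young_subgroup_reducible
    (n k : ℕ) (hn : 2 ≤ n) (hk1 : 1 ≤ k) (hk2 : k ≤ n - 1)
    (ψ : (Equiv.Perm.sumCongrHom (Fin k) (Fin (n - k))).range → ℂ)
    (hψ : IsIrrChar ψ) :
    ¬ IsIrrChar (indChar (Equiv.Perm.sumCongrHom (Fin k) (Fin (n - k))).range ψ) := by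
  obtain ⟨V, hVs, rfl⟩ := hψ
  rintro ⟨U, hUs, hUc⟩
  have hβpos : 0 < n - k := by omega
  exact induced_not_simple_aux (Equiv.Perm.sumCongrHom (Fin k) (Fin (n - k))).range
    V hVs U hUs hUc
    (Equiv.swap (Sum.inl (⟨0, hk1⟩ : Fin k)) (Sum.inr (⟨0, hβpos⟩ : Fin (n - k))))
    (swap_notin_range _ _)
    (fun h h1 h2 => conj_swap_eq _ _ h h1 h2)
end Helpers
end

section
/- Let W = S_n act as a group of permutation matrices on the reflection representation, and let π be an irreducible representation of a proper parabolic subgroup (a Young subgroup S_λ) of S_n. Then Ind_{S_λ}^{S_n} π is reducible. More generally, no irreducible representation of a finite complex reflection group W is induced from a proper parabolic subgroup of W. -/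
open scoped Classical

open Module LinearMap Representation CategoryTheory

lemma sum_dite_subgroup {G : Type} [Group G] [Fintype G] (P : Subgroup G) (f : ↥P → ℂ) :
    ∑ g : G, (if h : g ∈ P then f ⟨g, h⟩ else 0) = ∑ p : ↥P, f p := by
  have h1 : ∀ p : ↥P, (if h : (p : G) ∈ P then f ⟨(p : G), h⟩ else 0) = f p := by
    intro p; rw [dif_pos p.2]
  rw [Finset.sum_congr rfl (fun (p : ↥P) _ => (h1 p).symm)]
  rw [← Finset.sum_subtype (Finset.univ.filter (· ∈ P)) (by simp)
      (fun g => if h : g ∈ P then f ⟨g, h⟩ else 0)]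
  exact (Finset.sum_subset (Finset.filter_subset _ _) (fun g _ hg => by
    simp only [Finset.mem_filter, Finset.mem_univ, true_and] at hg
    exact dif_neg hg)).symm

lemma sum_char_mul_char_inv {H : Type} [Group H] [Fintype H] (A B : FDRep ℂ H) :
    ∑ h : H, A.character h * B.character h⁻¹ =
      (Fintype.card H : ℂ) * (finrank ℂ (invariants (linHom B.ρ A.ρ)) : ℂ) := by
  haveI : Invertible ((Fintype.card H : ℂ)) :=
    invertibleOfNonzero (Nat.cast_ne_zero.mpr Fintype.card_ne_zero)
  have h1 : ∀ h : H, A.character h * B.character h⁻¹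
      = (FDRep.of (linHom B.ρ A.ρ)).character h := by
    intro h
    rw [FDRep.char_linHom, mul_comm]
  rw [Finset.sum_congr rfl (fun h _ => h1 h)]
  haveI : Invertible ((Nat.card H : ℂ)) :=
    invertibleOfNonzero (Nat.cast_ne_zero.mpr Nat.card_pos.ne')
  have h2 := FDRep.average_char_eq_finrank_invariants (FDRep.of (linHom B.ρ A.ρ))
  rw [show (FDRep.of (linHom B.ρ A.ρ)).ρ = linHom B.ρ A.ρ from FDRep.of_ρ' _] at h2
  calc ∑ h : H, (FDRep.of (linHom B.ρ A.ρ)).character h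
      = (Fintype.card H : ℂ) *
        (⅟(Fintype.card H : ℂ) • ∑ h : H, (FDRep.of (linHom B.ρ A.ρ)).character h) := by
        rw [smul_eq_mul, ← mul_assoc, mul_invOf_self, one_mul]
    _ = _ := by rw [smul_eq_mul, invOf_eq_inv, ← Nat.card_eq_fintype_card, h2]

lemma invariants_linHom_pos {H : Type} [Group H] (B : FDRep ℂ H) (hB : Nontrivial B) :
    0 < finrank ℂ (invariants (linHom B.ρ B.ρ)) := by
  have hmem : (LinearMap.id : B →ₗ[ℂ] B) ∈ invariants (linHom B.ρ B.ρ) := by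
    intro h
    rw [linHom_apply]
    ext v
    show (B.ρ h) ((LinearMap.id : B →ₗ[ℂ] B) ((B.ρ h⁻¹) v)) = v
    rw [LinearMap.id_apply]
    change (B.ρ h * B.ρ h⁻¹) v = v
    rw [← map_mul, mul_inv_cancel, map_one, Module.End.one_apply]
  have hne : (LinearMap.id : B →ₗ[ℂ] B) ≠ 0 := by
    obtain ⟨x, y, hxy⟩ := hB
    intro h0
    apply hxy
    have hx : (LinearMap.id : B →ₗ[ℂ] B) x = 0 := by rw [h0]; rfl
    have hy : (LinearMap.id : B →ₗ[ℂ] B) y = 0 := by rw [h0]; rfl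
    simp only [LinearMap.id_apply] at hx hy
    rw [hx, hy]
  have : Nontrivial (invariants (linHom B.ρ B.ρ)) :=
    nontrivial_of_ne ⟨LinearMap.id, hmem⟩ 0 (by
      intro h
      exact hne (congrArg Subtype.val h))
  exact Module.finrank_pos_iff.mpr this

lemma unit_commute_of_fixes {V : Type} [AddCommGroup V] [Module ℂ V] [FiniteDimensional ℂ V]
    (s g : (V →ₗ[ℂ] V)ˣ)
    (hs : finrank ℂ (LinearMap.ker ((s : V →ₗ[ℂ] V) - LinearMap.id)) = finrank ℂ V - 1)
    (u₀ : V) (hu₀ : (s : V →ₗ[ℂ] V) u₀ ≠ u₀)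
    (hg1 : (g : V →ₗ[ℂ] V) u₀ = u₀)
    (hg2 : (g : V →ₗ[ℂ] V) ((s : V →ₗ[ℂ] V) u₀) = (s : V →ₗ[ℂ] V) u₀)
    (hord : IsOfFinOrder (g * s * g⁻¹ * s⁻¹)) :
    g * s = s * g := by
  set σ : V →ₗ[ℂ] V := (s : V →ₗ[ℂ] V) with hσ
  set F : V →ₗ[ℂ] V := σ - LinearMap.id with hF
  set e : V := σ u₀ - u₀ with he_def
  have he : e ≠ 0 := sub_ne_zero.mpr hu₀
  haveI : Nontrivial V := ⟨⟨σ u₀, u₀, hu₀⟩⟩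
  have hn : 1 ≤ finrank ℂ V := Module.finrank_pos
  have hrank : finrank ℂ (LinearMap.range F) = 1 := by
    have := LinearMap.finrank_range_add_finrank_ker F
    rw [hs] at this
    omega
  have heF : e ∈ LinearMap.range F := ⟨u₀, by simp [hF, he_def]⟩
  have hspan : LinearMap.range F = Submodule.span ℂ {e} := by
    refine (Submodule.eq_of_le_of_finrank_le
      ((Submodule.span_singleton_le_iff_mem e _).mpr heF) ?_).symm
    rw [hrank, finrank_span_singleton he]
  have hFv : ∀ v : V, ∃ a : ℂ, F v = a • e := by
    intro v
    have : F v ∈ Submodule.span ℂ {e} := hspan ▸ LinearMap.mem_range_self F v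
    obtain ⟨a, ha⟩ := Submodule.mem_span_singleton.mp this
    exact ⟨a, ha.symm⟩
  -- basic facts about inverses
  have hsinv_s : ∀ v : V, ((s⁻¹ : (V →ₗ[ℂ] V)ˣ) : V →ₗ[ℂ] V) (σ v) = v := by
    intro v
    change (((s⁻¹ : (V →ₗ[ℂ] V)ˣ) : V →ₗ[ℂ] V) * σ) v = v
    rw [hσ, ← Units.val_mul, inv_mul_cancel, Units.val_one, Module.End.one_apply]
  have hs_sinv : ∀ v : V, σ (((s⁻¹ : (V →ₗ[ℂ] V)ˣ) : V →ₗ[ℂ] V) v) = v := by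
    intro v
    change (σ * ((s⁻¹ : (V →ₗ[ℂ] V)ˣ) : V →ₗ[ℂ] V)) v = v
    rw [hσ, ← Units.val_mul, mul_inv_cancel, Units.val_one, Module.End.one_apply]
  have hginv_g : ∀ v : V, ((g⁻¹ : (V →ₗ[ℂ] V)ˣ) : V →ₗ[ℂ] V) ((g : V →ₗ[ℂ] V) v) = v := by
    intro v
    change (((g⁻¹ : (V →ₗ[ℂ] V)ˣ) : V →ₗ[ℂ] V) * (g : V →ₗ[ℂ] V)) v = v
    rw [← Units.val_mul, inv_mul_cancel, Units.val_one, Module.End.one_apply]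
  have hg_ginv : ∀ v : V, (g : V →ₗ[ℂ] V) (((g⁻¹ : (V →ₗ[ℂ] V)ˣ) : V →ₗ[ℂ] V) v) = v := by
    intro v
    change ((g : V →ₗ[ℂ] V) * ((g⁻¹ : (V →ₗ[ℂ] V)ˣ) : V →ₗ[ℂ] V)) v = v
    rw [← Units.val_mul, mul_inv_cancel, Units.val_one, Module.End.one_apply]
  -- the eigenvalue of s on the line spanned by e
  obtain ⟨c, hc⟩ := hFv e
  set ζ : ℂ := 1 + c with hζdef
  have hse : σ e = ζ • e := by
    have h1 : σ e - e = c • e := by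
      have : F e = σ e - e := by simp [hF]
      rw [← this, hc]
    have : σ e = c • e + e := by rw [← h1]; abel
    rw [this, hζdef, add_smul, one_smul]; abel
  have hζ : ζ ≠ 0 := by
    intro h0
    apply he
    have h1 : σ e = 0 := by rw [hse, h0, zero_smul]
    have := hsinv_s e
    rw [h1, map_zero] at this
    exact this.symm
  have hsinv_e : ((s⁻¹ : (V →ₗ[ℂ] V)ˣ) : V →ₗ[ℂ] V) e = ζ⁻¹ • e := by
    have h1 := hsinv_s e
    rw [hse, map_smul] at h1
    have := congrArg (fun w => ζ⁻¹ • w) h1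
    simp only [smul_smul, inv_mul_cancel₀ hζ, one_smul] at this
    exact this
  have hge : (g : V →ₗ[ℂ] V) e = e := by
    rw [he_def, map_sub, hg1, hg2]
  have hginv_e : ((g⁻¹ : (V →ₗ[ℂ] V)ˣ) : V →ₗ[ℂ] V) e = e := by
    have := hginv_g e
    rw [hge] at this
    exact this
  -- the commutator
  set t : (V →ₗ[ℂ] V)ˣ := g * s * g⁻¹ * s⁻¹ with ht
  set τ : V →ₗ[ℂ] V := (t : V →ₗ[ℂ] V) with hτ
  have hτv : ∀ v : V, τ v = (g : V →ₗ[ℂ] V) (σ (((g⁻¹ : (V →ₗ[ℂ] V)ˣ) : V →ₗ[ℂ] V)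
      (((s⁻¹ : (V →ₗ[ℂ] V)ˣ) : V →ₗ[ℂ] V) v))) := by
    intro v
    rw [hτ, ht]
    simp only [Units.val_mul, Module.End.mul_apply]
    rfl
  have hkey : ∀ v : V, ∃ a : ℂ, τ v = v + a • e := by
    intro v
    obtain ⟨a, ha⟩ := hFv v
    -- s⁻¹ v = v + b • e
    have hb : ((s⁻¹ : (V →ₗ[ℂ] V)ˣ) : V →ₗ[ℂ] V) v = v + (-(a * ζ⁻¹)) • e := by
      have h1 : ((s⁻¹ : (V →ₗ[ℂ] V)ˣ) : V →ₗ[ℂ] V) (σ v - v)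
          = v - ((s⁻¹ : (V →ₗ[ℂ] V)ˣ) : V →ₗ[ℂ] V) v := by
        rw [map_sub, hsinv_s]
      have h2 : σ v - v = a • e := by rw [← ha]; simp [hF]
      rw [h2, map_smul, hsinv_e, smul_smul] at h1
      have h1' : v - ((s⁻¹ : (V →ₗ[ℂ] V)ˣ) : V →ₗ[ℂ] V) v = (a * ζ⁻¹) • e := h1.symm
      have h1'' : ((s⁻¹ : (V →ₗ[ℂ] V)ˣ) : V →ₗ[ℂ] V) v = v - (a * ζ⁻¹) • e := by
        rw [← h1']; abel
      rw [h1'', neg_smul]; abel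
    obtain ⟨a', ha'⟩ := hFv (((g⁻¹ : (V →ₗ[ℂ] V)ˣ) : V →ₗ[ℂ] V) v)
    refine ⟨a' + (-(a * ζ⁻¹)) * ζ, ?_⟩
    have e1 : ((g⁻¹ : (V →ₗ[ℂ] V)ˣ) : V →ₗ[ℂ] V) (((s⁻¹ : (V →ₗ[ℂ] V)ˣ) : V →ₗ[ℂ] V) v)
        = ((g⁻¹ : (V →ₗ[ℂ] V)ˣ) : V →ₗ[ℂ] V) v + (-(a * ζ⁻¹)) • e := by
      rw [hb, map_add, map_smul, hginv_e]
    have e2 : σ (((g⁻¹ : (V →ₗ[ℂ] V)ˣ) : V →ₗ[ℂ] V) v + (-(a * ζ⁻¹)) • e)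
        = σ (((g⁻¹ : (V →ₗ[ℂ] V)ˣ) : V →ₗ[ℂ] V) v) + ((-(a * ζ⁻¹)) * ζ) • e := by
      rw [map_add, map_smul, hse, smul_smul]
    have e3 : (g : V →ₗ[ℂ] V) (σ (((g⁻¹ : (V →ₗ[ℂ] V)ˣ) : V →ₗ[ℂ] V) v)
          + ((-(a * ζ⁻¹)) * ζ) • e)
        = (g : V →ₗ[ℂ] V) (σ (((g⁻¹ : (V →ₗ[ℂ] V)ˣ) : V →ₗ[ℂ] V) v))
          + ((-(a * ζ⁻¹)) * ζ) • e := by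
      rw [map_add, map_smul, hge]
    have h3 : (g : V →ₗ[ℂ] V) (σ (((g⁻¹ : (V →ₗ[ℂ] V)ˣ) : V →ₗ[ℂ] V) v)) = v + a' • e := by
      have h4 : σ (((g⁻¹ : (V →ₗ[ℂ] V)ˣ) : V →ₗ[ℂ] V) v)
          = ((g⁻¹ : (V →ₗ[ℂ] V)ˣ) : V →ₗ[ℂ] V) v + a' • e := by
        have h5 : F (((g⁻¹ : (V →ₗ[ℂ] V)ˣ) : V →ₗ[ℂ] V) v)
            = σ (((g⁻¹ : (V →ₗ[ℂ] V)ˣ) : V →ₗ[ℂ] V) v)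
              - ((g⁻¹ : (V →ₗ[ℂ] V)ˣ) : V →ₗ[ℂ] V) v := by simp [hF]
        rw [ha'] at h5
        have h6 : σ (((g⁻¹ : (V →ₗ[ℂ] V)ˣ) : V →ₗ[ℂ] V) v)
            - ((g⁻¹ : (V →ₗ[ℂ] V)ˣ) : V →ₗ[ℂ] V) v = a' • e := h5.symm
        rw [sub_eq_iff_eq_add] at h6
        rw [h6]; abel
      rw [h4, map_add, map_smul, hg_ginv, hge]
    rw [hτv v, e1, e2, e3, h3, add_smul]
    abel
  have hτe : τ e = e := by
    rw [hτv e, hsinv_e, map_smul, hginv_e, map_smul, hse, smul_smul,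
      inv_mul_cancel₀ hζ, one_smul, hge]
  -- N := τ - 1 squares to zero
  set N : V →ₗ[ℂ] V := τ - 1 with hN
  have hNe : N e = 0 := by
    have : N e = τ e - e := by simp [hN]
    rw [this, hτe, sub_self]
  have hNv : ∀ v : V, ∃ a : ℂ, N v = a • e := by
    intro v
    obtain ⟨a, ha⟩ := hkey v
    refine ⟨a, ?_⟩
    have : N v = τ v - v := by simp [hN]
    rw [this, ha]; abel
  have hNN : N * N = 0 := by
    ext v
    obtain ⟨a, ha⟩ := hNv v
    rw [Module.End.mul_apply, ha, map_smul, hNe, smul_zero]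
    rfl
  -- finite order forces N = 0
  obtain ⟨m, hm0, hm⟩ := isOfFinOrder_iff_pow_eq_one.mp hord
  have hτ1 : τ = 1 + N := by rw [hN]; abel
  have hpow : ∀ k : ℕ, τ ^ k = 1 + (k : ℂ) • N := by
    intro k
    induction k with
    | zero => simp
    | succ k ih =>
      rw [pow_succ, ih, hτ1]
      rw [mul_add, add_mul, add_mul, one_mul, mul_one, smul_mul_assoc, hNN, smul_zero]
      rw [Nat.cast_succ, add_smul, one_smul]
      abel
  have hτm : τ ^ m = 1 := by
    rw [hτ]
    rw [← Units.val_pow_eq_pow_val, hm, Units.val_one]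
  rw [hpow m] at hτm
  have hmN : (m : ℂ) • N = 0 := by
    have := hτm
    have h2 : (1 : V →ₗ[ℂ] V) + (m : ℂ) • N - 1 = 1 - 1 := by rw [this]
    simpa using h2
  have hN0 : N = 0 := by
    rcases smul_eq_zero.mp hmN with h | h
    · exact absurd h (Nat.cast_ne_zero.mpr hm0.ne')
    · exact h
  have hτid : τ = 1 := by rw [hτ1, hN0, add_zero]
  have ht1 : t = 1 := Units.ext (by rw [← hτ, hτid]; rfl)
  have h5 : g * s * g⁻¹ = s := by
    have := ht
    rw [ht1] at this
    have h6 : g * s * g⁻¹ * s⁻¹ = 1 := this.symm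
    exact mul_inv_eq_one.mp h6
  calc g * s = g * s * g⁻¹ * g := by rw [inv_mul_cancel_right]
  _ = s * g := by rw [h5]

/-- The Mackey-type summand. -/
noncomputable def indS {G : Type} [Group G] [Fintype G] (P : Subgroup G) (ψ : ↥P → ℂ)
    (z : G) : ℂ :=
  ∑ p : ↥P, if h : z⁻¹ * (↑p)⁻¹ * z ∈ P then ψ p * ψ ⟨z⁻¹ * (↑p)⁻¹ * z, h⟩ else 0

/-- The subgroup of `P` of elements whose conjugate by `z` still lies in `P`. -/
def conjSub {G : Type} [Group G] (P : Subgroup G) (z : G) : Subgroup ↥P where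
  carrier := {p : ↥P | z⁻¹ * ↑p * z ∈ P}
  one_mem' := by
    show z⁻¹ * ↑(1 : ↥P) * z ∈ P
    simp only [OneMemClass.coe_one, mul_one]
    simpa using one_mem P
  mul_mem' := by
    intro a b ha hb
    have h : z⁻¹ * ↑(a * b) * z = (z⁻¹ * ↑a * z) * (z⁻¹ * ↑b * z) := by
      rw [Subgroup.coe_mul]; group
    show z⁻¹ * ↑(a * b) * z ∈ P
    rw [h]; exact mul_mem ha hb
  inv_mem' := by
    intro a ha
    have h : z⁻¹ * ↑(a⁻¹) * z = (z⁻¹ * ↑a * z)⁻¹ := by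
      rw [Subgroup.coe_inv]; group
    show z⁻¹ * ↑(a⁻¹) * z ∈ P
    rw [h]; exact inv_mem ha

lemma mem_conjSub {G : Type} [Group G] (P : Subgroup G) (z : G) (p : ↥P) :
    p ∈ conjSub P z ↔ z⁻¹ * ↑p * z ∈ P := Iff.rfl

/-- Conjugation by `z` as a homomorphism from `conjSub P z` to `P`. -/
def conjHom {G : Type} [Group G] (P : Subgroup G) (z : G) : ↥(conjSub P z) →* ↥P where
  toFun d := ⟨z⁻¹ * ↑↑d * z, d.2⟩
  map_one' := by ext; simp
  map_mul' a b := by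
    ext
    show z⁻¹ * ↑↑(a * b) * z = (z⁻¹ * ↑↑a * z) * (z⁻¹ * ↑↑b * z)
    rw [show ((↑(a * b) : ↥P) : G) = ↑↑a * ↑↑b by rfl]
    group

lemma sum_char_self_s5 {H : Type} [Group H] [Fintype H] (Y : FDRep ℂ H)
    (hY : CategoryTheory.Simple Y) :
    ∑ h : H, Y.character h * Y.character h⁻¹ = (Fintype.card H : ℂ) := by
  haveI := hY
  letI hFT : Fintype H := ‹Fintype H›
  letI hInv : Invertible ((Nat.card H) : ℂ) :=
    invertibleOfNonzero (Nat.cast_ne_zero.mpr Nat.card_pos.ne')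
  have horth := FDRep.char_orthonormal (k := ℂ) (G := H) Y Y
  rw [if_pos ⟨Iso.refl Y⟩] at horth
  have h2 : ∑ g : H, Y.character g * Y.character g⁻¹
      = ((Fintype.card H) : ℂ) := by
    calc ∑ g : H, Y.character g * Y.character g⁻¹
        = ((Fintype.card H) : ℂ) *
          (((Nat.card H) : ℂ)⁻¹ *
            ∑ g : H, Y.character g * Y.character g⁻¹) := by
          rw [Nat.card_eq_fintype_card, ← mul_assoc,
            mul_inv_cancel₀ (Nat.cast_ne_zero.mpr Fintype.card_ne_zero), one_mul]
      _ = ((Fintype.card H) : ℂ) := by rw [horth]; norm_num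
  exact h2

/-- `indS` written as a character pairing over `conjSub P z`. -/
lemma indS_sum_form {G : Type} [Group G] [Fintype G] (P : Subgroup G) (ψ : ↥P → ℂ)
    (Y : FDRep ℂ ↥P) (hYchar : Y.character = ψ) (z : G) :
    indS P ψ z =
      ∑ d : ↥(conjSub P z),
        (FDRep.of (Y.ρ.comp (conjSub P z).subtype)).character d *
          (FDRep.of (Y.ρ.comp (conjHom P z))).character d⁻¹ := by
  rw [indS]
  have h1 : ∀ p : ↥P,
      (if h : z⁻¹ * (↑p)⁻¹ * z ∈ P then ψ p * ψ ⟨z⁻¹ * (↑p)⁻¹ * z, h⟩ else 0)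
      = (if h : p ∈ conjSub P z then ψ p * ψ ((conjHom P z ⟨p, h⟩)⁻¹) else 0) := by
    intro p
    by_cases h : p ∈ conjSub P z
    · have h' : z⁻¹ * (↑p)⁻¹ * z ∈ P := by
        have : z⁻¹ * (↑p)⁻¹ * z = (z⁻¹ * ↑p * z)⁻¹ := by group
        rw [this]; exact inv_mem h
      rw [dif_pos h', dif_pos h]
      congr 1
      congr 1
      ext
      show z⁻¹ * (↑p)⁻¹ * z = ((conjHom P z ⟨p, h⟩ : ↥P) : G)⁻¹
      show z⁻¹ * (↑p)⁻¹ * z = (z⁻¹ * ↑p * z)⁻¹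
      group
    · have h' : ¬ (z⁻¹ * (↑p)⁻¹ * z ∈ P) := by
        intro hc
        apply h
        show z⁻¹ * ↑p * z ∈ P
        have : z⁻¹ * ↑p * z = (z⁻¹ * (↑p)⁻¹ * z)⁻¹ := by group
        rw [this]; exact inv_mem hc
      rw [dif_neg h', dif_neg h]
  rw [Finset.sum_congr rfl (fun p _ => h1 p)]
  have h2 := sum_dite_subgroup (G := ↥P) (conjSub P z)
    (fun d => ψ ↑d * ψ ((conjHom P z d)⁻¹))
  rw [h2]
  apply Finset.sum_congr rfl
  intro d _
  have hA : (FDRep.of (Y.ρ.comp (conjSub P z).subtype)).character d = ψ ↑d := by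
    rw [← hYchar]; rfl
  have hB : (FDRep.of (Y.ρ.comp (conjHom P z))).character d⁻¹ = ψ ((conjHom P z d)⁻¹) := by
    rw [← hYchar, ← map_inv]; rfl
  rw [hA, hB]

lemma indS_nat {G : Type} [Group G] [Fintype G] (P : Subgroup G) (ψ : ↥P → ℂ)
    (Y : FDRep ℂ ↥P) (hYchar : Y.character = ψ) (z : G) :
    ∃ n : ℕ, indS P ψ z = (n : ℂ) := by
  rw [indS_sum_form P ψ Y hYchar z, sum_char_mul_char_inv]
  refine ⟨Fintype.card ↥(conjSub P z) * finrank ℂ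
    (invariants (linHom (FDRep.of (Y.ρ.comp (conjHom P z))).ρ
      (FDRep.of (Y.ρ.comp (conjSub P z).subtype)).ρ)), ?_⟩
  push_cast
  ring

lemma indS_ne_zero {G : Type} [Group G] [Fintype G] (P : Subgroup G) (ψ : ↥P → ℂ)
    (Y : FDRep ℂ ↥P) (hYchar : Y.character = ψ) (hNon : Nontrivial Y) (z : G)
    (hcomm : ∀ p : ↥P, z⁻¹ * ↑p * z ∈ P → z⁻¹ * (↑p : G) * z = ↑p) :
    indS P ψ z ≠ 0 := by
  rw [indS_sum_form P ψ Y hYchar z]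
  have hhom : conjHom P z = (conjSub P z).subtype := by
    ext d
    show z⁻¹ * ↑↑d * z = ↑↑d
    exact hcomm ↑d d.2
  rw [hhom, sum_char_mul_char_inv]
  apply mul_ne_zero
  · exact Nat.cast_ne_zero.mpr Fintype.card_ne_zero
  · exact Nat.cast_ne_zero.mpr
      (invariants_linHom_pos (FDRep.of (Y.ρ.comp (conjSub P z).subtype)) hNon).ne'

lemma indS_coe {G : Type} [Group G] [Fintype G] (P : Subgroup G) (ψ : ↥P → ℂ)
    (Y : FDRep ℂ ↥P) (hYchar : Y.character = ψ) (hYs : CategoryTheory.Simple Y) (q : ↥P) :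
    indS P ψ (↑q : G) = (Fintype.card ↥P : ℂ) := by
  rw [indS]
  have h1 : ∀ p : ↥P,
      (if h : (↑q : G)⁻¹ * (↑p)⁻¹ * ↑q ∈ P then ψ p * ψ ⟨(↑q : G)⁻¹ * (↑p)⁻¹ * ↑q, h⟩ else 0)
      = ψ p * ψ p⁻¹ := by
    intro p
    have hmem : (↑q : G)⁻¹ * (↑p)⁻¹ * ↑q ∈ P := by
      have : (↑q : G)⁻¹ * (↑p)⁻¹ * ↑q = ((q⁻¹ * p⁻¹ * q : ↥P) : G) := by
        push_cast; rfl
      rw [this]; exact SetLike.coe_mem _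
    rw [dif_pos hmem]
    congr 1
    have he : (⟨(↑q : G)⁻¹ * (↑p)⁻¹ * ↑q, hmem⟩ : ↥P) = q⁻¹ * p⁻¹ * q := by
      ext; push_cast; rfl
    rw [he, ← hYchar]
    have := FDRep.char_conj Y (p⁻¹) (q⁻¹)
    rw [inv_inv] at this
    rw [← this]
  rw [Finset.sum_congr rfl (fun p _ => h1 p), ← hYchar]
  exact sum_char_self_s5 Y hYs

lemma key_sum {G : Type} [Group G] [Fintype G] (P : Subgroup G) (ψ : ↥P → ℂ)
    (X : FDRep ℂ G) (hXs : CategoryTheory.Simple X) (hXchar : X.character = indChar P ψ) :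
    ∑ z : G, indS P ψ z = ((Fintype.card ↥P : ℂ)) ^ 2 := by
  classical
  set cP : ℂ := (Fintype.card ↥P : ℂ) with hcPdef
  set cG : ℂ := (Fintype.card G : ℂ) with hcGdef
  have hcP : cP ≠ 0 := Nat.cast_ne_zero.mpr Fintype.card_ne_zero
  have hcG : cG ≠ 0 := Nat.cast_ne_zero.mpr Fintype.card_ne_zero
  set T : G → ℂ := fun g => ∑ x : G,
    (if h : x⁻¹ * g * x ∈ P then ψ ⟨x⁻¹ * g * x, h⟩ else 0) with hTdef
  have hchi : ∀ g : G, X.character g = cP⁻¹ * T g := by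
    intro g
    rw [hXchar]
    show (Nat.card ↥P : ℂ)⁻¹ * _ = _
    rw [Nat.card_eq_fintype_card]
  have hE1 : ∑ g : G, X.character g * X.character g⁻¹ = cG := sum_char_self_s5 X hXs
  -- the inner reindexed sum
  have hinner : ∀ x : G,
      (∑ g : G, (if h : x⁻¹ * g * x ∈ P then ψ ⟨x⁻¹ * g * x, h⟩ else 0) * T g⁻¹)
        = ∑ z : G, indS P ψ z := by
    intro x
    have hre := Equiv.sum_comp ((Equiv.mulRight x⁻¹).trans (Equiv.mulLeft x))
      (fun g => (if h : x⁻¹ * g * x ∈ P then ψ ⟨x⁻¹ * g * x, h⟩ else 0) * T g⁻¹)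
    rw [← hre]
    simp only [Equiv.trans_apply, Equiv.coe_mulLeft, Equiv.coe_mulRight]
    have harg : ∀ g : G, x⁻¹ * (x * (g * x⁻¹)) * x = g := by intro g; group
    simp only [harg]
    have harg2 : ∀ g : G, (x * (g * x⁻¹))⁻¹ = x * g⁻¹ * x⁻¹ := by intro g; group
    simp only [harg2]
    have hstep : (∑ g : G, (if h : g ∈ P then ψ ⟨g, h⟩ else 0) * T (x * g⁻¹ * x⁻¹))
        = ∑ p : ↥P, ψ p * T (x * (↑p)⁻¹ * x⁻¹) := by
      rw [← sum_dite_subgroup P (fun p => ψ p * T (x * (↑p)⁻¹ * x⁻¹))]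
      apply Finset.sum_congr rfl
      intro g _
      by_cases h : g ∈ P
      · rw [dif_pos h, dif_pos h]
      · rw [dif_neg h, dif_neg h, zero_mul]
    rw [hstep]
    have hTval : ∀ p : ↥P, T (x * (↑p)⁻¹ * x⁻¹)
        = ∑ z : G, (if h : z⁻¹ * (↑p)⁻¹ * z ∈ P then ψ ⟨z⁻¹ * (↑p)⁻¹ * z, h⟩ else 0) := by
      intro p
      have hre2 := Equiv.sum_comp (Equiv.mulLeft x)
        (fun y => if h : y⁻¹ * (x * (↑p)⁻¹ * x⁻¹) * y ∈ P then
          ψ ⟨y⁻¹ * (x * (↑p)⁻¹ * x⁻¹) * y, h⟩ else 0)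
      have hT0 : T (x * (↑p)⁻¹ * x⁻¹) = ∑ y : G,
          (if h : y⁻¹ * (x * (↑p)⁻¹ * x⁻¹) * y ∈ P then
            ψ ⟨y⁻¹ * (x * (↑p)⁻¹ * x⁻¹) * y, h⟩ else 0) := rfl
      rw [hT0, ← hre2]
      simp only [Equiv.coe_mulLeft]
      have harg3 : ∀ z : G, (x * z)⁻¹ * (x * (↑p)⁻¹ * x⁻¹) * (x * z) = z⁻¹ * (↑p)⁻¹ * z := by
        intro z; group
      simp only [harg3]
    rw [Finset.sum_congr rfl (fun p _ => by rw [hTval p])]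
    rw [Finset.sum_congr rfl (fun p _ => Finset.mul_sum _ _ _)]
    rw [Finset.sum_comm]
    apply Finset.sum_congr rfl
    intro z _
    rw [indS]
    apply Finset.sum_congr rfl
    intro p _
    by_cases h : z⁻¹ * (↑p)⁻¹ * z ∈ P
    · rw [dif_pos h, dif_pos h]
    · rw [dif_neg h, dif_neg h, mul_zero]
  have hE2 : ∑ g : G, T g * T g⁻¹ = cG * ∑ z : G, indS P ψ z := by
    have s1 : ∑ g : G, T g * T g⁻¹ = ∑ g : G, ∑ x : G,
        (if h : x⁻¹ * g * x ∈ P then ψ ⟨x⁻¹ * g * x, h⟩ else 0) * T g⁻¹ := by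
      apply Finset.sum_congr rfl
      intro g _
      rw [show T g = ∑ x : G, (if h : x⁻¹ * g * x ∈ P then ψ ⟨x⁻¹ * g * x, h⟩ else 0) from rfl,
        Finset.sum_mul]
    rw [s1, Finset.sum_comm]
    rw [Finset.sum_congr rfl (fun x _ => hinner x)]
    rw [Finset.sum_const, Finset.card_univ, nsmul_eq_mul]
  have hL : ∑ g : G, X.character g * X.character g⁻¹
      = cP⁻¹ * cP⁻¹ * (cG * ∑ z : G, indS P ψ z) := by
    rw [Finset.sum_congr rfl (fun g _ => by rw [hchi g, hchi g⁻¹, mul_mul_mul_comm])]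
    rw [← Finset.mul_sum, hE2]
  rw [hE1] at hL
  have h4 : cP * cP * cG = cG * ∑ z : G, indS P ψ z := by
    calc cP * cP * cG = cP * cP * (cP⁻¹ * cP⁻¹ * (cG * ∑ z : G, indS P ψ z)) := by
          rw [← hL]
      _ = (cP * cP⁻¹) * (cP * cP⁻¹) * (cG * ∑ z : G, indS P ψ z) := by ring
      _ = cG * ∑ z : G, indS P ψ z := by rw [mul_inv_cancel₀ hcP]; ring
  have h5 : cG * (cP * cP) = cG * ∑ z : G, indS P ψ z := by rw [← h4]; ring
  have h6 := mul_left_cancel₀ hcG h5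
  rw [← h6]; ring

/-- No irreducible representation of a finite complex reflection group `W ≤ GL(V)` is induced
from a proper parabolic subgroup `P` of `W` (the pointwise stabiliser of a subspace `U ⊆ V`):
every character of `W` induced from an irreducible character of `P` is reducible.  In
particular this applies to the symmetric group `S_n` acting on its reflection representation
with its Young (parabolic) subgroups. -/
theorem induced_from_parabolic_reducible
    {V : Type} [AddCommGroup V] [Module ℂ V] [FiniteDimensional ℂ V]
    (W : Subgroup (V →ₗ[ℂ] V)ˣ) [Fintype W]
    (hrefl : W = Subgroup.closure {g : (V →ₗ[ℂ] V)ˣ | g ∈ W ∧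
        Module.finrank ℂ (LinearMap.ker ((g : V →ₗ[ℂ] V) - LinearMap.id)) =
          Module.finrank ℂ V - 1})
    (U : Submodule ℂ V) (P : Subgroup W)
    (hP : ∀ w : W, w ∈ P ↔ ∀ v ∈ U, ((w : (V →ₗ[ℂ] V)ˣ) : V →ₗ[ℂ] V) v = v)
    (hproper : P ≠ ⊤)
    (ψ : P → ℂ) (hψ : IsIrrChar ψ) :
    ¬ IsIrrChar (indChar P ψ) := by
  intro hind
  obtain ⟨X, hXs, hXchar⟩ := hind
  obtain ⟨Y, hYs, hYchar⟩ := hψ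
  -- there is a reflection outside P
  have hexw : ∃ w : ↥W, w ∉ P := by
    by_contra h
    push_neg at h
    exact hproper ((Subgroup.eq_top_iff' P).mpr h)
  have hs : ∃ s : ↥W, s ∉ P ∧ Module.finrank ℂ
      (LinearMap.ker (((s : (V →ₗ[ℂ] V)ˣ) : V →ₗ[ℂ] V) - LinearMap.id)) =
        Module.finrank ℂ V - 1 := by
    by_contra h
    push_neg at h
    have hsub : W ≤ Subgroup.map W.subtype P := by
      conv_lhs => rw [hrefl]
      apply (Subgroup.closure_le _).mpr
      intro g hg
      obtain ⟨hgW, hgcond⟩ := hg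
      by_cases hmem : (⟨g, hgW⟩ : ↥W) ∈ P
      · exact ⟨⟨g, hgW⟩, hmem, rfl⟩
      · exact absurd hgcond (h ⟨g, hgW⟩ hmem)
    obtain ⟨w, hw⟩ := hexw
    obtain ⟨p, hp, hpe⟩ := hsub w.2
    exact hw (by rwa [← Subtype.ext hpe])
  obtain ⟨s, hsP, hscond⟩ := hs
  -- the representation space of Y is nontrivial
  have hNon : Nontrivial Y := by
    by_contra hn
    rw [not_nontrivial_iff_subsingleton] at hn
    have hchar0 : ∀ p : ↥P, Y.character p = 0 := by
      intro p
      show LinearMap.trace ℂ _ (Y.ρ p) = 0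
      rw [show Y.ρ p = 0 from Subsingleton.elim _ _]
      exact map_zero _
    have h0 := sum_char_self_s5 Y hYs
    rw [Finset.sum_congr rfl (fun p _ => by rw [hchar0 p, zero_mul]),
      Finset.sum_const_zero] at h0
    exact (Nat.cast_ne_zero.mpr Fintype.card_ne_zero) h0.symm
  -- the key counting
  have hkey := key_sum P ψ X hXs hXchar
  have hPpart : ∑ z ∈ Finset.univ.filter (fun z : ↥W => z ∈ P), indS P ψ z
      = (Fintype.card ↥P : ℂ) * (Fintype.card ↥P : ℂ) := by
    rw [Finset.sum_subtype (p := fun z : ↥W => z ∈ P)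
      (Finset.univ.filter (fun z : ↥W => z ∈ P)) (fun z => by simp) (indS P ψ)]
    rw [Finset.sum_congr rfl (fun q _ => indS_coe P ψ Y hYchar hYs q)]
    rw [Finset.sum_const, Finset.card_univ, nsmul_eq_mul]
  have hsplit := Finset.sum_filter_add_sum_filter_not Finset.univ
    (fun z : ↥W => z ∈ P) (indS P ψ)
  rw [hkey] at hsplit
  have hrest : ∑ z ∈ Finset.univ.filter (fun z : ↥W => ¬ z ∈ P), indS P ψ z = 0 := by
    have h1 := eq_sub_of_add_eq' hsplit
    rw [hPpart] at h1
    rw [h1, sq, sub_self]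
  choose N hN using fun z : ↥W => indS_nat P ψ Y hYchar z
  rw [Finset.sum_congr rfl (fun z _ => hN z), ← Nat.cast_sum] at hrest
  have hrestN : ∑ z ∈ Finset.univ.filter (fun z : ↥W => ¬ z ∈ P), N z = 0 :=
    Nat.cast_eq_zero.mp hrest
  have hsmem : s ∈ Finset.univ.filter (fun z : ↥W => ¬ z ∈ P) :=
    Finset.mem_filter.mpr ⟨Finset.mem_univ s, hsP⟩
  have hNs : N s = 0 := (Finset.sum_eq_zero_iff.mp hrestN) s hsmem
  have hSs0 : indS P ψ s = 0 := by rw [hN s, hNs, Nat.cast_zero]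
  -- contradiction with positivity at s
  refine indS_ne_zero P ψ Y hYchar hNon s ?_ hSs0
  intro p hp
  -- extract geometry
  have hu : ∃ u₀ ∈ U, ((s : (V →ₗ[ℂ] V)ˣ) : V →ₗ[ℂ] V) u₀ ≠ u₀ := by
    by_contra hc
    push_neg at hc
    exact hsP ((hP s).mpr hc)
  obtain ⟨u₀, hu₀U, hu₀⟩ := hu
  set su : (V →ₗ[ℂ] V)ˣ := (s : (V →ₗ[ℂ] V)ˣ) with hsu
  set pu : (V →ₗ[ℂ] V)ˣ := ((↑p : ↥W) : (V →ₗ[ℂ] V)ˣ) with hpu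
  have hg1 : (pu : V →ₗ[ℂ] V) u₀ = u₀ := (hP ↑p).mp p.2 u₀ hu₀U
  -- p fixes s u₀
  have hfix := (hP (s⁻¹ * ↑p * s)).mp hp u₀ hu₀U
  have hco : ((s⁻¹ * ↑p * s : ↥W) : (V →ₗ[ℂ] V)ˣ) = su⁻¹ * pu * su := by
    push_cast
    rfl
  rw [hco] at hfix
  have hfix2 : ((su⁻¹ : (V →ₗ[ℂ] V)ˣ) : V →ₗ[ℂ] V)
      ((pu : V →ₗ[ℂ] V) ((su : V →ₗ[ℂ] V) u₀)) = u₀ := by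
    have : ((su⁻¹ * pu * su : (V →ₗ[ℂ] V)ˣ) : V →ₗ[ℂ] V) u₀
        = ((su⁻¹ : (V →ₗ[ℂ] V)ˣ) : V →ₗ[ℂ] V)
          ((pu : V →ₗ[ℂ] V) ((su : V →ₗ[ℂ] V) u₀)) := by
      simp only [Units.val_mul, Module.End.mul_apply]
    rw [← this, hfix]
  have hg2 : (pu : V →ₗ[ℂ] V) ((su : V →ₗ[ℂ] V) u₀) = (su : V →ₗ[ℂ] V) u₀ := by
    have h3 := congrArg (fun v => (su : V →ₗ[ℂ] V) v) hfix2
    have hcancel : ∀ v : V, (su : V →ₗ[ℂ] V) (((su⁻¹ : (V →ₗ[ℂ] V)ˣ) : V →ₗ[ℂ] V) v) = v := by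
      intro v
      change ((su : V →ₗ[ℂ] V) * ((su⁻¹ : (V →ₗ[ℂ] V)ˣ) : V →ₗ[ℂ] V)) v = v
      rw [← Units.val_mul, mul_inv_cancel, Units.val_one, Module.End.one_apply]
    rw [hcancel] at h3
    exact h3
  -- finite order of the commutator
  have hord : IsOfFinOrder (pu * su * pu⁻¹ * su⁻¹) := by
    have h4 : IsOfFinOrder ((↑p : ↥W) * s * (↑p : ↥W)⁻¹ * s⁻¹) := isOfFinOrder_of_finite _
    have h5 := W.subtype.isOfFinOrder h4
    have h6 : W.subtype ((↑p : ↥W) * s * (↑p : ↥W)⁻¹ * s⁻¹) = pu * su * pu⁻¹ * su⁻¹ := by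
      simp [map_mul, map_inv, hpu, hsu]
    rwa [h6] at h5
  have hcomm := unit_commute_of_fixes su pu hscond u₀ hu₀ hg1 hg2 hord
  -- conclude
  have hgoal : ((s⁻¹ * ↑p * s : ↥W) : (V →ₗ[ℂ] V)ˣ) = ((↑p : ↥W) : (V →ₗ[ℂ] V)ˣ) := by
    rw [hco]
    rw [mul_assoc, hcomm, inv_mul_cancel_left]
  exact Subtype.ext hgoal
end

section
/- Let m be odd, m ≥ 3, W the dihedral group of order 2m with reflection representation φ₁ as above. Then the representation φ₁ satisfies Σ_{l=0}^{m-1} (y_2, α_{s_l})(α_{s_l}^∨, x_1) φ₁(s_l) ≠ 0; in particular φ₁ is not rigid. -/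
/-- Non-rigidity of the reflection representation `φ₁` of the dihedral group of order `2m`,
`m` odd: for `(k,j) = (2,1)` the rigidity sum
`Σ_{l=0}^{m-1} (y_2, α_{s_l})(α_{s_l}^∨, x_1) · φ₁(s_l)` is nonzero, where `s_l = r^l s`,
`(y_2, α_{s_l}) = -ζ^{-l}`, `(α_{s_l}^∨, x_1) = 1` and `φ₁(s_l) = !![0, ζ^l; ζ^{-l}, 0]`. -/
theorem dihedral_phi_one_not_rigid
    (m : ℕ) (hodd : Odd m) (hm : 3 ≤ m) (ζ : ℂ) (hζ : IsPrimitiveRoot ζ m) :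
    ∑ l ∈ Finset.range m,
        ((-(ζ ^ l)⁻¹ * (1 : ℂ)) •
          (!![0, ζ ^ l; (ζ ^ l)⁻¹, 0] : Matrix (Fin 2) (Fin 2) ℂ)) ≠
      (0 : Matrix (Fin 2) (Fin 2) ℂ) := by
  have hζ0 : ζ ≠ 0 := hζ.ne_zero (by omega)
  intro h
  have h01 := congrFun (congrFun h 0) 1
  rw [Matrix.sum_apply] at h01
  simp only [Matrix.smul_apply, Matrix.cons_val', Matrix.cons_val_one, Matrix.head_cons,
    Matrix.cons_val_zero, Matrix.empty_val', Matrix.cons_val_fin_one, smul_eq_mul,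
    Matrix.zero_apply] at h01
  have : ∀ l ∈ Finset.range m, (-(ζ ^ l)⁻¹ * (1:ℂ)) * (!![0, ζ ^ l; (ζ ^ l)⁻¹, 0] : Matrix (Fin 2) (Fin 2) ℂ) 0 1 = -1 := by
    intro l _
    simp [Matrix.cons_val_one]
    field_simp
  rw [Finset.sum_congr rfl this, Finset.sum_const, Finset.card_range] at h01
  simp at h01
  have : (m : ℂ) ≠ 0 := Nat.cast_ne_zero.mpr (by omega)
  exact this (by exact_mod_cast h01)
end

section
/- Let λ be a partition of n whose Specht module π_λ over ℂ has the property that the element Σ_{j=2}^{n} (1,j) of the group algebra ℂS_n acts on π_λ by a scalar. Then λ is a rectangle, i.e. λ = (l^b) for some positive integers l, b with lb = n. -/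
open scoped Classical

noncomputable section

/-- Sum, in the group algebra, over the row-stabiliser of the canonical tableau of `μ`. -/
def rowSym (μ : YoungDiagram) : MonoidAlgebra ℂ (Equiv.Perm μ.cells) :=
  ∑ σ ∈ Finset.univ.filter
      (fun σ : Equiv.Perm μ.cells => ∀ c : μ.cells, ((σ c : ℕ × ℕ).1 = (c : ℕ × ℕ).1)),
    MonoidAlgebra.single σ (1 : ℂ)

/-- Signed sum, in the group algebra, over the column-stabiliser of the canonical tableau
of `μ`. -/
def colSym (μ : YoungDiagram) : MonoidAlgebra ℂ (Equiv.Perm μ.cells) :=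
  ∑ σ ∈ Finset.univ.filter
      (fun σ : Equiv.Perm μ.cells => ∀ c : μ.cells, ((σ c : ℕ × ℕ).2 = (c : ℕ × ℕ).2)),
    MonoidAlgebra.single σ ((Equiv.Perm.sign σ : ℤ) : ℂ)

/-- The Young symmetrizer of the canonical tableau of shape `μ`. -/
def youngSymmetrizer (μ : YoungDiagram) : MonoidAlgebra ℂ (Equiv.Perm μ.cells) :=
  rowSym μ * colSym μ

/-- The Specht module `π_μ`: the left ideal of the group algebra generated by the Young
symmetrizer of shape `μ`. -/
def spechtIdeal (μ : YoungDiagram) : Submodule ℂ (MonoidAlgebra ℂ (Equiv.Perm μ.cells)) :=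
  LinearMap.range (LinearMap.mulRight ℂ (youngSymmetrizer μ))

section AuxJM

lemma ys_coeff (μ : YoungDiagram) (σ : Equiv.Perm μ.cells) :
    (youngSymmetrizer μ).coeff σ =
      ∑ p ∈ Finset.univ.filter
          (fun p : Equiv.Perm μ.cells => ∀ c : μ.cells, ((p c : ℕ × ℕ).1 = (c : ℕ × ℕ).1)),
        ∑ q ∈ Finset.univ.filter
          (fun q : Equiv.Perm μ.cells => ∀ c : μ.cells, ((q c : ℕ × ℕ).2 = (c : ℕ × ℕ).2)),
          if p * q = σ then ((Equiv.Perm.sign q : ℤ) : ℂ) else 0 := by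
  rw [youngSymmetrizer, rowSym, colSym, Finset.sum_mul_sum]
  rw [MonoidAlgebra.coeff_sum, Finsupp.finset_sum_apply]
  refine Finset.sum_congr rfl fun p _ => ?_
  rw [MonoidAlgebra.coeff_sum, Finsupp.finset_sum_apply]
  refine Finset.sum_congr rfl fun q _ => ?_
  rw [MonoidAlgebra.single_mul_single, one_mul, MonoidAlgebra.coeff_single, Finsupp.single_apply]


variable {μ : YoungDiagram}

lemma fix_pt {p q : Equiv.Perm μ.cells}
    (hp : ∀ c : μ.cells, ((p c : ℕ × ℕ).1 = (c : ℕ × ℕ).1))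
    (hq : ∀ c : μ.cells, ((q c : ℕ × ℕ).2 = (c : ℕ × ℕ).2))
    {x : μ.cells} (hx : p (q x) = x) : q x = x := by
  have h1 := hp (q x)
  rw [hx] at h1
  exact Subtype.ext (Prod.ext h1.symm (hq x))

lemma decomp_one {p q : Equiv.Perm μ.cells}
    (hp : ∀ c : μ.cells, ((p c : ℕ × ℕ).1 = (c : ℕ × ℕ).1))
    (hq : ∀ c : μ.cells, ((q c : ℕ × ℕ).2 = (c : ℕ × ℕ).2))
    (h : p * q = 1) : p = 1 ∧ q = 1 := by
  have hq1 : q = 1 := Equiv.ext fun x => by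
    have hx : p (q x) = x := by
      have := congrArg (fun σ : Equiv.Perm μ.cells => σ x) h
      simpa using this
    simpa using fix_pt hp hq hx
  constructor
  · rw [hq1, mul_one] at h; exact h
  · exact hq1

lemma decomp_swap {d c : μ.cells} (hdc : d ≠ c) {p q : Equiv.Perm μ.cells}
    (hp : ∀ x : μ.cells, ((p x : ℕ × ℕ).1 = (x : ℕ × ℕ).1))
    (hq : ∀ x : μ.cells, ((q x : ℕ × ℕ).2 = (x : ℕ × ℕ).2))
    (h : p * q = Equiv.swap d c) :
    (q = 1 ∧ p = Equiv.swap d c ∧ (d : ℕ × ℕ).1 = (c : ℕ × ℕ).1) ∨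
    (q = Equiv.swap d c ∧ p = 1 ∧ (d : ℕ × ℕ).2 = (c : ℕ × ℕ).2) := by
  have happ : ∀ x, p (q x) = Equiv.swap d c x := by
    intro x
    have := congrArg (fun σ : Equiv.Perm μ.cells => σ x) h
    simpa using this
  have hfix : ∀ x : μ.cells, x ≠ d → x ≠ c → q x = x := by
    intro x hxd hxc
    exact fix_pt hp hq (by rw [happ, Equiv.swap_apply_of_ne_of_ne hxd hxc])
  have hqd : q d = d ∨ q d = c := by
    by_contra hcon
    push_neg at hcon
    have := hfix (q d) hcon.1 hcon.2
    exact hcon.1 (q.injective this)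
  rcases hqd with h1 | h1
  · -- q d = d, then q c = c, q = 1, p = swap
    left
    have hqc : q c = c := by
      by_cases h2 : q c = d
      · exact absurd (q.injective (h1.trans h2.symm)) hdc
      · by_cases h3 : q c = c
        · exact h3
        · have := hfix (q c) h2 h3
          exact (q.injective this)
    have hq1 : q = 1 := Equiv.ext fun x => by
      by_cases hx : x = d
      · subst hx; simpa using h1
      by_cases hx2 : x = c
      · subst hx2; simpa using hqc
      · simpa using hfix x hx hx2
    have hpswap : p = Equiv.swap d c := by rw [hq1, mul_one] at h; exact h
    refine ⟨hq1, hpswap, ?_⟩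
    have := hp d
    rw [hpswap, Equiv.swap_apply_left] at this
    exact this.symm
  · -- q d = c
    right
    have hqc : q c = d := by
      by_cases h2 : q c = d
      · exact h2
      · by_cases h3 : q c = c
        · exact absurd (q.injective (h1.trans h3.symm)).symm hdc.symm
        · exact absurd (q.injective (hfix (q c) h2 h3)) h3
    have hqswap : q = Equiv.swap d c := Equiv.ext fun x => by
      by_cases hx : x = d
      · subst hx; rw [Equiv.swap_apply_left]; exact h1
      by_cases hx2 : x = c
      · subst hx2; rw [Equiv.swap_apply_right]; exact hqc
      · rw [Equiv.swap_apply_of_ne_of_ne hx hx2]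
        exact hfix x hx hx2
    have hp1 : p = 1 := by
      rw [hqswap] at h
      have := mul_right_cancel (b := Equiv.swap d c) (a := p) (c := 1) ?_
      · exact this
      · rw [h, one_mul]
    refine ⟨hqswap, hp1, ?_⟩
    have := hq d
    rw [hqswap, Equiv.swap_apply_left] at this
    exact this.symm


lemma rowPerm_one (μ : YoungDiagram) :
    (1 : Equiv.Perm μ.cells) ∈ Finset.univ.filter
      (fun p : Equiv.Perm μ.cells => ∀ c : μ.cells, ((p c : ℕ × ℕ).1 = (c : ℕ × ℕ).1)) := by
  simp

lemma ys_coeff_one (μ : YoungDiagram) : (youngSymmetrizer μ).coeff 1 = 1 := by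
  rw [ys_coeff]
  rw [Finset.sum_eq_single (1 : Equiv.Perm μ.cells)]
  · rw [Finset.sum_eq_single (1 : Equiv.Perm μ.cells)]
    · simp
    · intro q hq hq1
      rw [if_neg]
      intro h
      exact hq1 (decomp_one (by simp) (Finset.mem_filter.mp hq).2 h).2
    · intro h; exact absurd (by simp) h
  · intro p hp hp1
    refine Finset.sum_eq_zero fun q hq => ?_
    rw [if_neg]
    intro h
    exact hp1 (decomp_one (Finset.mem_filter.mp hp).2 (Finset.mem_filter.mp hq).2 h).1
  · intro h; exact absurd (by simp) h

lemma ys_coeff_swap (μ : YoungDiagram) (d c : μ.cells) (hdc : d ≠ c) :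
    (youngSymmetrizer μ).coeff (Equiv.swap d c) =
      (if (d : ℕ × ℕ).1 = (c : ℕ × ℕ).1 then 1 else 0)
        - (if (d : ℕ × ℕ).2 = (c : ℕ × ℕ).2 then 1 else 0) := by
  have hne : ¬((d : ℕ × ℕ).1 = (c : ℕ × ℕ).1 ∧ (d : ℕ × ℕ).2 = (c : ℕ × ℕ).2) := by
    rintro ⟨h1, h2⟩
    exact hdc (Subtype.ext (Prod.ext h1 h2))
  rw [ys_coeff]
  by_cases hrow : (d : ℕ × ℕ).1 = (c : ℕ × ℕ).1
  · -- unique decomposition p = swap, q = 1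
    have hcol : ¬((d : ℕ × ℕ).2 = (c : ℕ × ℕ).2) := fun h => hne ⟨hrow, h⟩
    rw [if_pos hrow, if_neg hcol, sub_zero]
    have hswapP : (Equiv.swap d c) ∈ Finset.univ.filter
        (fun p : Equiv.Perm μ.cells => ∀ x : μ.cells, ((p x : ℕ × ℕ).1 = (x : ℕ × ℕ).1)) := by
      rw [Finset.mem_filter]
      refine ⟨Finset.mem_univ _, fun x => ?_⟩
      by_cases hx : x = d
      · subst hx; rw [Equiv.swap_apply_left, hrow]
      by_cases hx2 : x = c
      · subst hx2; rw [Equiv.swap_apply_right, hrow]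
      · rw [Equiv.swap_apply_of_ne_of_ne hx hx2]
    rw [Finset.sum_eq_single (Equiv.swap d c)]
    · rw [Finset.sum_eq_single (1 : Equiv.Perm μ.cells)]
      · simp
      · intro q hq hq1
        rw [if_neg]
        intro h
        rcases decomp_swap hdc (Finset.mem_filter.mp hswapP).2 (Finset.mem_filter.mp hq).2 h with
          ⟨h1, _, _⟩ | ⟨_, _, h3⟩
        · exact hq1 h1
        · exact hcol h3
      · intro h; exact absurd (by simp) h
    · intro p hp hp1
      refine Finset.sum_eq_zero fun q hq => ?_
      rw [if_neg]
      intro h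
      rcases decomp_swap hdc (Finset.mem_filter.mp hp).2 (Finset.mem_filter.mp hq).2 h with
        ⟨_, h2, _⟩ | ⟨_, _, h3⟩
      · exact hp1 h2
      · exact hcol h3
    · intro h; exact absurd hswapP h
  · by_cases hcol : (d : ℕ × ℕ).2 = (c : ℕ × ℕ).2
    · -- unique decomposition p = 1, q = swap
      rw [if_neg hrow, if_pos hcol, zero_sub]
      have hswapQ : (Equiv.swap d c) ∈ Finset.univ.filter
          (fun q : Equiv.Perm μ.cells => ∀ x : μ.cells, ((q x : ℕ × ℕ).2 = (x : ℕ × ℕ).2)) := by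
        rw [Finset.mem_filter]
        refine ⟨Finset.mem_univ _, fun x => ?_⟩
        by_cases hx : x = d
        · subst hx; rw [Equiv.swap_apply_left, hcol]
        by_cases hx2 : x = c
        · subst hx2; rw [Equiv.swap_apply_right, hcol]
        · rw [Equiv.swap_apply_of_ne_of_ne hx hx2]
      rw [Finset.sum_eq_single (1 : Equiv.Perm μ.cells)]
      · rw [Finset.sum_eq_single (Equiv.swap d c)]
        · rw [if_pos (one_mul _), Equiv.Perm.sign_swap hdc]
          norm_num
        · intro q hq hq1
          rw [if_neg]
          intro h
          rcases decomp_swap hdc (by simp) (Finset.mem_filter.mp hq).2 h with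
            ⟨_, h2, h3⟩ | ⟨h1, _, _⟩
          · exact hrow h3
          · exact hq1 h1
        · intro h; exact absurd hswapQ h
      · intro p hp hp1
        refine Finset.sum_eq_zero fun q hq => ?_
        rw [if_neg]
        intro h
        rcases decomp_swap hdc (Finset.mem_filter.mp hp).2 (Finset.mem_filter.mp hq).2 h with
          ⟨_, _, h3⟩ | ⟨_, h2, _⟩
        · exact hrow h3
        · exact hp1 h2
      · intro h; exact absurd (by simp) h
    · rw [if_neg hrow, if_neg hcol, sub_zero]
      refine Finset.sum_eq_zero fun p hp => Finset.sum_eq_zero fun q hq => ?_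
      rw [if_neg]
      intro h
      rcases decomp_swap hdc (Finset.mem_filter.mp hp).2 (Finset.mem_filter.mp hq).2 h with
        ⟨_, _, h3⟩ | ⟨_, _, h3⟩
      · exact hrow h3
      · exact hcol h3

lemma card_row_filter (μ : YoungDiagram) (d : μ.cells) :
    (Finset.univ.filter fun c : μ.cells => (d : ℕ × ℕ).1 = (c : ℕ × ℕ).1).card
      = μ.rowLen (d : ℕ × ℕ).1 := by
  rw [YoungDiagram.rowLen_eq_card]
  apply Finset.card_bij (fun (c : μ.cells) _ => (c : ℕ × ℕ))
  · intro a ha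
    rw [YoungDiagram.mem_row_iff]
    exact ⟨(YoungDiagram.mem_cells _).mp a.2, ((Finset.mem_filter.mp ha).2).symm⟩
  · intro a _ b _ h; exact Subtype.ext h
  · intro b hb
    rw [YoungDiagram.mem_row_iff] at hb
    exact ⟨⟨b, (YoungDiagram.mem_cells _).mpr hb.1⟩,
      Finset.mem_filter.mpr ⟨Finset.mem_univ _, hb.2.symm⟩, rfl⟩

lemma card_col_filter (μ : YoungDiagram) (d : μ.cells) :
    (Finset.univ.filter fun c : μ.cells => (d : ℕ × ℕ).2 = (c : ℕ × ℕ).2).card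
      = μ.colLen (d : ℕ × ℕ).2 := by
  rw [YoungDiagram.colLen_eq_card]
  apply Finset.card_bij (fun (c : μ.cells) _ => (c : ℕ × ℕ))
  · intro a ha
    rw [YoungDiagram.mem_col_iff]
    exact ⟨(YoungDiagram.mem_cells _).mp a.2, ((Finset.mem_filter.mp ha).2).symm⟩
  · intro a _ b _ h; exact Subtype.ext h
  · intro b hb
    rw [YoungDiagram.mem_col_iff] at hb
    exact ⟨⟨b, (YoungDiagram.mem_cells _).mpr hb.1⟩,
      Finset.mem_filter.mpr ⟨Finset.mem_univ _, hb.2.symm⟩, rfl⟩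

lemma key_eq (μ : YoungDiagram) (c₀ : μ.cells) (z : ℂ)
    (hz : ∀ v ∈ spechtIdeal μ,
      (∑ c ∈ Finset.univ.erase c₀, MonoidAlgebra.single (Equiv.swap c₀ c) (1 : ℂ)) * v
        = z • v) (d : μ.cells) :
    (μ.rowLen (d : ℕ × ℕ).1 : ℂ) - (μ.colLen (d : ℕ × ℕ).2 : ℂ) = z := by
  have hv : MonoidAlgebra.single (Equiv.swap c₀ d) (1 : ℂ) * youngSymmetrizer μ
      ∈ spechtIdeal μ := ⟨MonoidAlgebra.single (Equiv.swap c₀ d) 1, rfl⟩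
  have h := hz _ hv
  have h' := congrArg (fun f : MonoidAlgebra ℂ (Equiv.Perm μ.cells) => f.coeff (Equiv.swap c₀ d)) h
  simp only [Finset.sum_mul] at h'
  rw [MonoidAlgebra.coeff_sum, Finsupp.finset_sum_apply, MonoidAlgebra.coeff_smul_apply] at h'
  rw [MonoidAlgebra.coeff_single_mul_apply] at h'
  rw [Equiv.swap_inv, Equiv.swap_mul_self] at h'
  rw [ys_coeff_one, mul_one, smul_eq_mul, mul_one] at h'
  -- now h' : ∑ c ∈ erase c₀, (single (swap c₀ c) 1 * (single (swap c₀ d) 1 * e)) (swap c₀ d) = z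
  have hterm : ∀ c ∈ Finset.univ.erase c₀,
      (MonoidAlgebra.single (Equiv.swap c₀ c) (1 : ℂ) *
        (MonoidAlgebra.single (Equiv.swap c₀ d) (1 : ℂ) * youngSymmetrizer μ)).coeff
        (Equiv.swap c₀ d)
      = (youngSymmetrizer μ).coeff (Equiv.swap d ((Equiv.swap c₀ d) c)) := by
    intro c _
    rw [MonoidAlgebra.coeff_single_mul_apply, MonoidAlgebra.coeff_single_mul_apply, one_mul, one_mul]
    congr 1
    rw [Equiv.swap_inv, Equiv.swap_inv]
    have hconj := Equiv.swap_apply_apply (Equiv.swap c₀ d) c₀ c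
    rw [Equiv.swap_apply_left] at hconj
    have : Equiv.swap c₀ d * (Equiv.swap c₀ c * Equiv.swap c₀ d) =
        Equiv.swap c₀ d * Equiv.swap c₀ c * (Equiv.swap c₀ d)⁻¹ := by
      rw [Equiv.swap_inv, mul_assoc]
    rw [this, ← hconj]
  rw [Finset.sum_congr rfl hterm] at h'
  -- reindex the sum by the bijection c ↦ swap c₀ d c
  have hre : ∑ c ∈ Finset.univ.erase c₀,
      (youngSymmetrizer μ).coeff (Equiv.swap d ((Equiv.swap c₀ d) c))
      = ∑ c ∈ Finset.univ.erase d, (youngSymmetrizer μ).coeff (Equiv.swap d c) := by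
    apply Finset.sum_bij (fun (c : μ.cells) _ => (Equiv.swap c₀ d) c)
    · intro a ha
      rw [Finset.mem_erase] at ha ⊢
      refine ⟨?_, Finset.mem_univ _⟩
      intro hda
      apply ha.1
      have := congrArg (Equiv.swap c₀ d) hda
      rwa [Equiv.swap_apply_self, Equiv.swap_apply_right] at this
    · intro a _ b _ hab; exact (Equiv.swap c₀ d).injective hab
    · intro b hb
      rw [Finset.mem_erase] at hb
      refine ⟨(Equiv.swap c₀ d) b, ?_, by rw [Equiv.swap_apply_self]⟩
      rw [Finset.mem_erase]
      refine ⟨?_, Finset.mem_univ _⟩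
      intro hbc
      apply hb.1
      have := congrArg (Equiv.swap c₀ d) hbc
      rwa [Equiv.swap_apply_self, Equiv.swap_apply_left] at this
    · intro a _; rfl
  rw [hre] at h'
  -- rewrite each coefficient
  have hterm2 : ∀ c ∈ Finset.univ.erase d,
      (youngSymmetrizer μ).coeff (Equiv.swap d c)
      = ((if (d : ℕ × ℕ).1 = (c : ℕ × ℕ).1 then 1 else 0)
          - (if (d : ℕ × ℕ).2 = (c : ℕ × ℕ).2 then 1 else 0) : ℂ) := by
    intro c hc
    exact ys_coeff_swap μ d c (Ne.symm (Finset.mem_erase.mp hc).1)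
  rw [Finset.sum_congr rfl hterm2, Finset.sum_sub_distrib, Finset.sum_boole,
    Finset.sum_boole] at h'
  rw [Finset.filter_erase, Finset.filter_erase] at h'
  have hdmem1 : d ∈ Finset.univ.filter
      (fun c : μ.cells => (d : ℕ × ℕ).1 = (c : ℕ × ℕ).1) := by simp
  have hdmem2 : d ∈ Finset.univ.filter
      (fun c : μ.cells => (d : ℕ × ℕ).2 = (c : ℕ × ℕ).2) := by simp
  rw [Finset.card_erase_of_mem hdmem1, Finset.card_erase_of_mem hdmem2,
    card_row_filter, card_col_filter] at h'
  have hd : (d : ℕ × ℕ) ∈ μ := (YoungDiagram.mem_cells _).mp d.2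
  have hr : 1 ≤ μ.rowLen (d : ℕ × ℕ).1 := by
    have : ((d : ℕ × ℕ).1, (d : ℕ × ℕ).2) ∈ μ := by
      simpa using hd
    rw [YoungDiagram.mem_iff_lt_rowLen] at this
    omega
  have hc : 1 ≤ μ.colLen (d : ℕ × ℕ).2 := by
    have : ((d : ℕ × ℕ).1, (d : ℕ × ℕ).2) ∈ μ := by
      simpa using hd
    rw [YoungDiagram.mem_iff_lt_colLen] at this
    omega
  rw [Nat.cast_sub hr, Nat.cast_sub hc] at h'
  rw [← h']
  push_cast
  ring

end AuxJM

/-- If the sum of transpositions `Σ_{j≥2} (1,j)` (here: the sum of all transpositions moving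
a fixed cell `c₀`) acts by a scalar on the Specht module `π_λ` of a partition `λ` of `n`,
then `λ` is a rectangle `(l^b)` with `l·b = n`. -/
theorem rectangle_of_jucysMurphy_scalar
    (n : ℕ) (hn : 0 < n) (μ : YoungDiagram) (hcard : μ.card = n)
    (c₀ : μ.cells) (z : ℂ)
    (hz : ∀ v ∈ spechtIdeal μ,
      (∑ c ∈ Finset.univ.erase c₀, MonoidAlgebra.single (Equiv.swap c₀ c) (1 : ℂ)) * v
        = z • v) :
    ∃ l b : ℕ, 0 < l ∧ 0 < b ∧ l * b = n ∧
      ∀ p : ℕ × ℕ, p ∈ μ ↔ p.1 < b ∧ p.2 < l := by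
  have key : ∀ d : μ.cells,
      (μ.rowLen (d : ℕ × ℕ).1 : ℂ) - (μ.colLen (d : ℕ × ℕ).2 : ℂ) = z :=
    key_eq μ c₀ z hz
  have key2 : ∀ a b : μ.cells,
      μ.rowLen (a : ℕ × ℕ).1 + μ.colLen (b : ℕ × ℕ).2
        = μ.rowLen (b : ℕ × ℕ).1 + μ.colLen (a : ℕ × ℕ).2 := by
    intro a b
    have h1 := (key a).trans (key b).symm
    have h2 : ((μ.rowLen (a : ℕ × ℕ).1 + μ.colLen (b : ℕ × ℕ).2 : ℕ) : ℂ)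
        = ((μ.rowLen (b : ℕ × ℕ).1 + μ.colLen (a : ℕ × ℕ).2 : ℕ) : ℂ) := by
      push_cast
      linear_combination h1
    exact_mod_cast h2
  have hc₀ : ((c₀ : ℕ × ℕ).1, (c₀ : ℕ × ℕ).2) ∈ μ := by
    simpa using (YoungDiagram.mem_cells _).mp c₀.2
  have h00 : (0, 0) ∈ μ := μ.up_left_mem (Nat.zero_le _) (Nat.zero_le _) hc₀
  set l := μ.rowLen 0 with hl
  set b := μ.colLen 0 with hb
  have hlpos : 0 < l := by
    have := h00
    rwa [YoungDiagram.mem_iff_lt_rowLen] at this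
  have hbpos : 0 < b := by
    have := h00
    rwa [YoungDiagram.mem_iff_lt_colLen] at this
  have c00 : μ.cells := ⟨(0, 0), (YoungDiagram.mem_cells _).mpr h00⟩
  have hrowLen : ∀ i : ℕ, i < b → μ.rowLen i = l := by
    intro i hi
    have hmem : (i, 0) ∈ μ := YoungDiagram.mem_iff_lt_colLen.mpr hi
    have := key2 ⟨(i, 0), (YoungDiagram.mem_cells _).mpr hmem⟩
      ⟨(0, 0), (YoungDiagram.mem_cells _).mpr h00⟩
    simp only at this
    omega
  have hcolLen : ∀ j : ℕ, j < l → μ.colLen j = b := by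
    intro j hj
    have hmem : (0, j) ∈ μ := YoungDiagram.mem_iff_lt_rowLen.mpr hj
    have := key2 ⟨(0, j), (YoungDiagram.mem_cells _).mpr hmem⟩
      ⟨(0, 0), (YoungDiagram.mem_cells _).mpr h00⟩
    simp only at this
    omega
  have hiff : ∀ p : ℕ × ℕ, p ∈ μ ↔ p.1 < b ∧ p.2 < l := by
    intro p
    constructor
    · intro hp
      have hp' : (p.1, p.2) ∈ μ := by simpa using hp
      constructor
      · have h1 : (p.1, 0) ∈ μ := μ.up_left_mem le_rfl (Nat.zero_le _) hp'
        rwa [YoungDiagram.mem_iff_lt_colLen] at h1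
      · have h2 : (0, p.2) ∈ μ := μ.up_left_mem (Nat.zero_le _) le_rfl hp'
        rwa [YoungDiagram.mem_iff_lt_rowLen] at h2
    · rintro ⟨h1, h2⟩
      have : p.1 < μ.colLen p.2 := by rw [hcolLen p.2 h2]; exact h1
      have hp' : (p.1, p.2) ∈ μ := YoungDiagram.mem_iff_lt_colLen.mpr this
      simpa using hp'
  refine ⟨l, b, hlpos, hbpos, ?_, hiff⟩
  have hcells : μ.cells = Finset.range b ×ˢ Finset.range l := by
    ext p
    rw [YoungDiagram.mem_cells, hiff p, Finset.mem_product, Finset.mem_range, Finset.mem_range]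
  have : μ.card = b * l := by
    rw [YoungDiagram.card, hcells, Finset.card_product, Finset.card_range, Finset.card_range]
  rw [mul_comm, ← hcard, this]

end
end

section
/- Fix m ≥ 0, k > 0, n = k(k+m), and a partition λ contained in the k × (k+m) box, padded with zeros to length k+m. Define β_i = λ_{k+m-i+1} + i - 1 for 1 ≤ i ≤ k+m and γ_j = λ†_{k-j+1} + j - 1 for 1 ≤ j ≤ k, where λ† is the transposed box-complement as above. Then the multiset {β_1,...,β_{k+m}} ∪ {γ_1,...,γ_k} equals {0, 1, 2, ..., 2k+m-1}, each element occurring exactly once. -/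
open scoped Classical

private lemma lam_anti (lam : ℕ → ℕ)
    (hdec : ∀ j, 1 ≤ j → lam (j + 1) ≤ lam j) :
    ∀ a b, 1 ≤ a → a ≤ b → lam b ≤ lam a := by
  intro a b ha hab
  induction b, hab using Nat.le_induction with
  | base => exact le_rfl
  | succ n hn ih => exact le_trans (hdec n (le_trans ha hn)) ih

private lemma galois (m k : ℕ) (lam : ℕ → ℕ)
    (hdec : ∀ j, 1 ≤ j → lam (j + 1) ≤ lam j)
    (r j : ℕ) (hr1 : 1 ≤ r) (hr2 : r ≤ k + m) (hj : 1 ≤ j) :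
    (r ≤ ((Finset.Icc 1 (k + m)).filter (fun s => j ≤ lam s)).card) ↔ j ≤ lam r := by
  constructor
  · intro h
    by_contra hc
    have hsub : (Finset.Icc 1 (k + m)).filter (fun s => j ≤ lam s) ⊆ Finset.Icc 1 (r - 1) := by
      intro s hs
      simp only [Finset.mem_filter, Finset.mem_Icc] at hs ⊢
      refine ⟨hs.1.1, ?_⟩
      by_contra hs'
      have : lam s ≤ lam r := lam_anti lam hdec r s hr1 (by omega)
      omega
    have := Finset.card_le_card hsub
    rw [Nat.card_Icc] at this
    omega
  · intro h
    have hsub : Finset.Icc 1 r ⊆ (Finset.Icc 1 (k + m)).filter (fun s => j ≤ lam s) := by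
      intro s hs
      simp only [Finset.mem_Icc] at hs
      simp only [Finset.mem_filter, Finset.mem_Icc]
      exact ⟨⟨hs.1, by omega⟩, le_trans h (lam_anti lam hdec s r hs.1 hs.2)⟩
    have := Finset.card_le_card hsub
    rw [Nat.card_Icc] at this
    omega

private lemma gamma_card (m k : ℕ) (lam : ℕ → ℕ)
    (hbound : ∀ j, 1 ≤ j → lam j ≤ k)
    (j : ℕ) (hj1 : 1 ≤ j) (hjk : j ≤ k) :
    ((Finset.Icc 1 (k + m)).filter
        (fun t => (k - j + 1) ≤ k - lam (k + m + 1 - t))).card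
      = (k + m) - ((Finset.Icc 1 (k + m)).filter (fun s => j ≤ lam s)).card := by
  have h1 : ((Finset.Icc 1 (k + m)).filter
      (fun t => (k - j + 1) ≤ k - lam (k + m + 1 - t))).card
      = ((Finset.Icc 1 (k + m)).filter (fun s => ¬ (j ≤ lam s))).card := by
    apply Finset.card_bij' (fun t _ => k + m + 1 - t) (fun s _ => k + m + 1 - s)
    · intro t ht
      simp only [Finset.mem_filter, Finset.mem_Icc] at ht ⊢
      have hu : lam (k + m + 1 - t) ≤ k := hbound _ (by omega)
      exact ⟨⟨by omega, by omega⟩, by omega⟩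
    · intro s hs
      simp only [Finset.mem_filter, Finset.mem_Icc] at hs ⊢
      have h2 : k + m + 1 - (k + m + 1 - s) = s := by omega
      rw [h2]
      have hu : lam s ≤ k := hbound _ hs.1.1
      exact ⟨⟨by omega, by omega⟩, by omega⟩
    · intro t ht
      simp only [Finset.mem_filter, Finset.mem_Icc] at ht
      omega
    · intro s hs
      simp only [Finset.mem_filter, Finset.mem_Icc] at hs
      omega
  have h2 := Finset.card_filter_add_card_filter_not
    (s := Finset.Icc 1 (k + m)) (p := fun s => j ≤ lam s)
  rw [Nat.card_Icc] at h2
  omega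

/-- Let `n = k(k+m)` with `k > 0` and `λ` a partition in the `k × (k+m)` box (1-based,
weakly decreasing, zero beyond index `k+m`).  With `β_i = λ_{k+m-i+1} + i - 1` for
`i ∈ [1, k+m]` and `γ_j = λ†_{k-j+1} + j - 1` for `j ∈ [1, k]`, where
`λ†_i = #{ t ∈ [1,k+m] : k - λ_{k+m+1-t} ≥ i }`, the multiset of all `β_i` and `γ_j`
is exactly `{0, 1, …, 2k+m-1}`, each element occurring once. -/
theorem cuspidal_symbol_content
    (m k : ℕ) (hk : 0 < k)
    (lam : ℕ → ℕ)
    (hdec : ∀ j, 1 ≤ j → lam (j + 1) ≤ lam j)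
    (hbound : ∀ j, 1 ≤ j → lam j ≤ k)
    (hzero : ∀ j, k + m < j → lam j = 0) :
    ((Finset.Icc 1 (k + m)).val.map (fun i => lam (k + m - i + 1) + i - 1)) +
      ((Finset.Icc 1 k).val.map (fun j =>
        ((Finset.Icc 1 (k + m)).filter
            (fun t => (k - j + 1) ≤ k - lam (k + m + 1 - t))).card + j - 1)) =
    Multiset.range (2 * k + m) := by
  classical
  set A : Multiset ℕ :=
    ((Finset.Icc 1 (k + m)).val.map (fun i => lam (k + m - i + 1) + i - 1)) with hAdef
  set B : Multiset ℕ :=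
    ((Finset.Icc 1 k).val.map (fun j =>
      ((Finset.Icc 1 (k + m)).filter
          (fun t => (k - j + 1) ≤ k - lam (k + m + 1 - t))).card + j - 1)) with hBdef
  have hLle : ∀ j : ℕ, ((Finset.Icc 1 (k + m)).filter (fun s => j ≤ lam s)).card ≤ k + m := by
    intro j
    have := Finset.card_le_card (Finset.filter_subset (fun s => j ≤ lam s) (Finset.Icc 1 (k + m)))
    rw [Nat.card_Icc] at this
    omega
  have hLmono : ∀ j j' : ℕ, j ≤ j' →
      ((Finset.Icc 1 (k + m)).filter (fun s => j' ≤ lam s)).card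
        ≤ ((Finset.Icc 1 (k + m)).filter (fun s => j ≤ lam s)).card := by
    intro j j' hjj
    apply Finset.card_le_card
    intro s hs
    simp only [Finset.mem_filter] at hs ⊢
    exact ⟨hs.1, by omega⟩
  -- Nodup of A
  have hA : A.Nodup := by
    refine Multiset.Nodup.map_on ?_ (Finset.Icc 1 (k + m)).nodup
    intro i hi i' hi' hf
    rw [Finset.mem_val, Finset.mem_Icc] at hi hi'
    rcases lt_trichotomy i i' with h | h | h
    · have := lam_anti lam hdec (k + m - i' + 1) (k + m - i + 1) (by omega) (by omega)
      omega
    · exact h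
    · have := lam_anti lam hdec (k + m - i + 1) (k + m - i' + 1) (by omega) (by omega)
      omega
  -- Nodup of B
  have hB : B.Nodup := by
    refine Multiset.Nodup.map_on ?_ (Finset.Icc 1 k).nodup
    intro j hj j' hj' hf
    rw [Finset.mem_val, Finset.mem_Icc] at hj hj'
    rw [gamma_card m k lam hbound j hj.1 hj.2, gamma_card m k lam hbound j' hj'.1 hj'.2] at hf
    have h1 := hLle j
    have h2 := hLle j'
    rcases lt_trichotomy j j' with h | h | h
    · have := hLmono j j' (le_of_lt h)
      omega
    · exact h
    · have := hLmono j' j (le_of_lt h)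
      omega
  -- Disjointness
  have hdisj : Disjoint A B := by
    rw [Multiset.disjoint_left]
    intro a haA haB
    rw [hAdef, Multiset.mem_map] at haA
    rw [hBdef, Multiset.mem_map] at haB
    obtain ⟨i, hi, hfi⟩ := haA
    obtain ⟨j, hj, hgj⟩ := haB
    rw [Finset.mem_val, Finset.mem_Icc] at hi hj
    have heq : lam (k + m - i + 1) + i - 1
        = ((Finset.Icc 1 (k + m)).filter
            (fun t => (k - j + 1) ≤ k - lam (k + m + 1 - t))).card + j - 1 := by
      rw [hfi, hgj]
    rw [gamma_card m k lam hbound j hj.1 hj.2] at heq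
    have hidx : k + m - i + 1 = k + m + 1 - i := by omega
    rw [hidx] at heq
    have hgal := galois m k lam hdec (k + m + 1 - i) j (by omega) (by omega) hj.1
    have hL := hLle j
    by_cases hcase : j ≤ lam (k + m + 1 - i)
    · have := hgal.2 hcase
      omega
    · have := mt hgal.1 hcase
      omega
  have hnd : (A + B).Nodup := Multiset.nodup_add.2 ⟨hA, hB, hdisj⟩
  -- all elements < 2k+m
  have hmem : ∀ x ∈ A + B, x < 2 * k + m := by
    intro x hx
    rw [Multiset.mem_add] at hx
    rcases hx with hx | hx
    · rw [hAdef, Multiset.mem_map] at hx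
      obtain ⟨i, hi, hfi⟩ := hx
      rw [Finset.mem_val, Finset.mem_Icc] at hi
      have := hbound (k + m - i + 1) (by omega)
      omega
    · rw [hBdef, Multiset.mem_map] at hx
      obtain ⟨j, hj, hgj⟩ := hx
      rw [Finset.mem_val, Finset.mem_Icc] at hj
      rw [gamma_card m k lam hbound j hj.1 hj.2] at hgj
      have := hLle j
      omega
  -- cardinality
  have hcard : Multiset.card (A + B) = 2 * k + m := by
    rw [Multiset.card_add, hAdef, hBdef, Multiset.card_map, Multiset.card_map]
    have h1 : Multiset.card (Finset.Icc 1 (k + m)).val = (Finset.Icc 1 (k + m)).card := rfl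
    have h2 : Multiset.card (Finset.Icc 1 k).val = (Finset.Icc 1 k).card := rfl
    rw [h1, h2, Nat.card_Icc, Nat.card_Icc]
    omega
  -- conclude
  have hsub : (A + B).toFinset ⊆ Finset.range (2 * k + m) := by
    intro x hx
    rw [Multiset.mem_toFinset] at hx
    rw [Finset.mem_range]
    exact hmem x hx
  have hfs : (A + B).toFinset = Finset.range (2 * k + m) := by
    apply Finset.eq_of_subset_of_card_le hsub
    rw [Finset.card_range, Multiset.toFinset_card_of_nodup hnd, hcard]
  have hval := congrArg Finset.val hfs
  rw [Multiset.toFinset_val, Finset.range_val, Multiset.dedup_eq_self.2 hnd] at hval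
  exact hval
end

section
/- Fix m ≥ 0 and suppose β_1 < β_2 < ... < β_{N+m} and γ_1 < γ_2 < ... < γ_N are nonnegative integers with the property that among the combined multiset of all β_i and γ_j, the multiplicities n_0, n_1, n_2, ... of the values 0, 1, 2, ... satisfy n_i ≥ n_{i+1} for all i ≥ 0 (each multiplicity at most 2). Let k = N - #{ i : n_i = 2 } and n = Σ_i β_i + Σ_j γ_j - N² - N(m-1) - m(m-1)/2. Then n = k(k+m). -/
open scoped Classical

lemma down_closed_eq_range (S : Finset ℕ)
    (h : ∀ v ∈ S, ∀ u, u ≤ v → u ∈ S) : S = Finset.range S.card := by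
  ext v
  simp only [Finset.mem_range]
  constructor
  · intro hv
    have hsub : Finset.range (v + 1) ⊆ S := by
      intro u hu
      exact h v hv u (by simpa [Nat.lt_succ_iff] using hu)
    have := Finset.card_le_card hsub
    simpa using this
  · intro hv
    by_contra hvS
    have hsub : S ⊆ Finset.range v := by
      intro w hw
      simp only [Finset.mem_range]
      by_contra hwv
      exact hvS (h w hw v (by omega))
    have := Finset.card_le_card hsub
    simp only [Finset.card_range] at this
    omega

lemma gauss_cast (a : ℕ) :
    ((∑ i ∈ Finset.range a, i : ℕ) : ℤ) * 2 = (a : ℤ) * ((a : ℤ) - 1) := by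
  cases a with
  | zero => simp
  | succ b =>
    have h := Finset.sum_range_id_mul_two (b + 1)
    have : (((∑ i ∈ Finset.range (b+1), i) * 2 : ℕ) : ℤ)
        = (((b+1) * b : ℕ) : ℤ) := by rw [h]; simp
    push_cast at this ⊢
    linarith

lemma choose_two_cast (a : ℕ) :
    ((Nat.choose a 2 : ℕ) : ℤ) * 2 = (a : ℤ) * ((a : ℤ) - 1) := by
  induction a with
  | zero => simp
  | succ b ih =>
    have h : Nat.choose (b+1) 2 = Nat.choose b 2 + b := by
      rw [Nat.choose_succ_succ]
      simp [Nat.choose_one_right, Nat.add_comm]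
    rw [h]
    push_cast
    linear_combination ih

lemma filter_range_lt (a b : ℕ) (h : a ≤ b) :
    (Finset.range b).filter (fun v => v < a) = Finset.range a := by
  ext v
  simp only [Finset.mem_filter, Finset.mem_range]
  omega

/-- If the combined multiset of entries of a symbol (`β` strictly increasing of length
`N + m`, `γ` strictly increasing of length `N`) has weakly decreasing multiplicities
`n_0 ≥ n_1 ≥ ⋯` (a cuspidal symbol), then with `k = N - #{v : mult v = 2}` and `n` defined
by `Σβ + Σγ = n + N² + N(m-1) + C(m,2)`, one has `n = k(k+m)`. -/
theorem cuspidal_symbol_size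
    (m N : ℕ) (β : Fin (N + m) → ℕ) (γ : Fin N → ℕ)
    (hβ : StrictMono β) (hγ : StrictMono γ)
    (mult : ℕ → ℕ)
    (hmult : ∀ v, mult v = (Finset.univ.filter (fun i => β i = v)).card +
      (Finset.univ.filter (fun j => γ j = v)).card)
    (hcusp : ∀ v, mult (v + 1) ≤ mult v)
    (k : ℕ) (hk : k = N - Nat.card {v : ℕ // mult v = 2})
    (n : ℕ)
    (hn : ((∑ i, β i : ℕ) : ℤ) + (∑ j, γ j : ℕ) =
      (n : ℤ) + (N : ℤ) ^ 2 + (N : ℤ) * ((m : ℤ) - 1) + (Nat.choose m 2 : ℤ)) :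
    n = k * (k + m) := by
  classical
  -- fiber cardinalities
  set Fβ : ℕ → ℕ := fun v => (Finset.univ.filter (fun i => β i = v)).card with hFβ
  set Fγ : ℕ → ℕ := fun v => (Finset.univ.filter (fun j => γ j = v)).card with hFγ
  have hβ1 : ∀ v, Fβ v ≤ 1 := by
    intro v
    apply Finset.card_le_one.mpr
    intro a ha b hb
    simp only [Finset.mem_filter] at ha hb
    exact hβ.injective (ha.2.trans hb.2.symm)
  have hγ1 : ∀ v, Fγ v ≤ 1 := by
    intro v
    apply Finset.card_le_one.mpr
    intro a ha b hb
    simp only [Finset.mem_filter] at ha hb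
    exact hγ.injective (ha.2.trans hb.2.symm)
  have hmult' : ∀ v, mult v = Fβ v + Fγ v := fun v => hmult v
  have hmle : ∀ v, mult v ≤ 2 := by
    intro v
    rw [hmult' v]
    have := hβ1 v
    have := hγ1 v
    omega
  have hanti : Antitone mult := antitone_nat_of_succ_le hcusp
  -- the bound
  set B : ℕ := (∑ i, β i) + (∑ j, γ j) + 1 with hB
  have hβbound : ∀ i, β i ≤ ∑ i, β i := fun i =>
    Finset.single_le_sum (fun _ _ => Nat.zero_le _) (Finset.mem_univ i)
  have hγbound : ∀ j, γ j ≤ ∑ j, γ j := fun j =>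
    Finset.single_le_sum (fun _ _ => Nat.zero_le _) (Finset.mem_univ j)
  have hB0 : ∀ v, B ≤ v → mult v = 0 := by
    intro v hv
    rw [hmult v]
    have h1 : (Finset.univ.filter (fun i => β i = v)) = ∅ := by
      apply Finset.filter_eq_empty_iff.mpr
      intro i _
      have := hβbound i
      omega
    have h2 : (Finset.univ.filter (fun j => γ j = v)) = ∅ := by
      apply Finset.filter_eq_empty_iff.mpr
      intro j _
      have := hγbound j
      omega
    simp [h1, h2]
  -- levels
  set Sfull : Finset ℕ := (Finset.range B).filter (fun v => 1 ≤ mult v) with hSfulldef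
  set Sdbl : Finset ℕ := (Finset.range B).filter (fun v => 2 ≤ mult v) with hSdbldef
  set t : ℕ := Sfull.card with ht
  set d : ℕ := Sdbl.card with hd
  have hSfull : Sfull = Finset.range t := by
    apply down_closed_eq_range
    intro v hv u hu
    simp only [hSfulldef, Finset.mem_filter, Finset.mem_range] at hv ⊢
    exact ⟨by omega, le_trans hv.2 (hanti hu)⟩
  have hSdbl : Sdbl = Finset.range d := by
    apply down_closed_eq_range
    intro v hv u hu
    simp only [hSdbldef, Finset.mem_filter, Finset.mem_range] at hv ⊢
    exact ⟨by omega, le_trans hv.2 (hanti hu)⟩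
  have hdt : d ≤ t := by
    apply Finset.card_le_card
    intro v hv
    simp only [hSfulldef, hSdbldef, Finset.mem_filter] at hv ⊢
    exact ⟨hv.1, by omega⟩
  have htB : t ≤ B := by
    have : Sfull ⊆ Finset.range B := Finset.filter_subset _ _
    have := Finset.card_le_card this
    simpa using this
  have hvB : ∀ v, 1 ≤ mult v → v < B := by
    intro v h
    by_contra h'
    have := hB0 v (by omega)
    omega
  have h2iff : ∀ v, mult v = 2 ↔ v < d := by
    intro v
    constructor
    · intro h
      have hvb : v < B := hvB v (by omega)
      have : v ∈ Sdbl := by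
        simp only [hSdbldef, Finset.mem_filter, Finset.mem_range]
        exact ⟨hvb, by omega⟩
      rw [hSdbl] at this
      simpa using this
    · intro h
      have : v ∈ Sdbl := by rw [hSdbl]; simpa using h
      simp only [hSdbldef, Finset.mem_filter] at this
      have := hmle v
      omega
  have h1iff : ∀ v, 1 ≤ mult v ↔ v < t := by
    intro v
    constructor
    · intro h
      have hvb : v < B := hvB v h
      have : v ∈ Sfull := by
        simp only [hSfulldef, Finset.mem_filter, Finset.mem_range]
        exact ⟨hvb, h⟩
      rw [hSfull] at this
      simpa using this
    · intro h
      have : v ∈ Sfull := by rw [hSfull]; simpa using h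
      simp only [hSfulldef, Finset.mem_filter] at this
      exact this.2
  have hmform : ∀ v, mult v = (if v < d then 1 else 0) + (if v < t then 1 else 0) := by
    intro v
    by_cases h1 : v < d
    · have h2 : v < t := by omega
      have := (h2iff v).mpr h1
      simp [h1, h2, this]
    · by_cases h2 : v < t
      · have ha := (h1iff v).mpr h2
        have hb : mult v ≠ 2 := fun h => h1 ((h2iff v).mp h)
        have := hmle v
        simp only [h1, h2, if_true, if_false]
        omega
      · have ha : ¬ (1 ≤ mult v) := fun h => h2 ((h1iff v).mp h)
        simp only [h1, h2, if_false]
        omega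
  -- fiberwise counting
  have hmapsβ : ∀ i ∈ (Finset.univ : Finset (Fin (N + m))), β i ∈ Finset.range B := by
    intro i _
    simp only [Finset.mem_range]
    have := hβbound i
    omega
  have hmapsγ : ∀ j ∈ (Finset.univ : Finset (Fin N)), γ j ∈ Finset.range B := by
    intro j _
    simp only [Finset.mem_range]
    have := hγbound j
    omega
  have hcardβ : ∑ v ∈ Finset.range B, Fβ v = N + m := by
    have := Finset.card_eq_sum_card_fiberwise hmapsβ
    simp only [Finset.card_univ, Fintype.card_fin] at this
    exact this.symm
  have hcardγ : ∑ v ∈ Finset.range B, Fγ v = N := by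
    have := Finset.card_eq_sum_card_fiberwise hmapsγ
    simp only [Finset.card_univ, Fintype.card_fin] at this
    exact this.symm
  have hsumβ : ∑ v ∈ Finset.range B, v * Fβ v = ∑ i, β i := by
    have h := Finset.sum_fiberwise_of_maps_to hmapsβ β
    rw [← h]
    apply Finset.sum_congr rfl
    intro v _
    have : ∑ i ∈ Finset.univ.filter (fun i => β i = v), β i
        = ∑ i ∈ Finset.univ.filter (fun i => β i = v), v := by
      apply Finset.sum_congr rfl
      intro i hi
      simp only [Finset.mem_filter] at hi
      exact hi.2
    rw [this, Finset.sum_const, smul_eq_mul, mul_comm]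
  have hsumγ : ∑ v ∈ Finset.range B, v * Fγ v = ∑ j, γ j := by
    have h := Finset.sum_fiberwise_of_maps_to hmapsγ γ
    rw [← h]
    apply Finset.sum_congr rfl
    intro v _
    have : ∑ j ∈ Finset.univ.filter (fun j => γ j = v), γ j
        = ∑ j ∈ Finset.univ.filter (fun j => γ j = v), v := by
      apply Finset.sum_congr rfl
      intro j hj
      simp only [Finset.mem_filter] at hj
      exact hj.2
    rw [this, Finset.sum_const, smul_eq_mul, mul_comm]
  -- total count : d + t = 2N + m
  have hindic : ∀ a : ℕ, a ≤ B →
      ∑ v ∈ Finset.range B, (if v < a then 1 else 0) = a := by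
    intro a ha
    rw [← Finset.sum_filter, filter_range_lt a B ha]
    simp
  have hindic' : ∀ a : ℕ, a ≤ B →
      ∑ v ∈ Finset.range B, (if v < a then v else 0) = ∑ v ∈ Finset.range a, v := by
    intro a ha
    rw [← Finset.sum_filter, filter_range_lt a B ha]
  have htotal : d + t = 2 * N + m := by
    have h1 : ∑ v ∈ Finset.range B, mult v = 2 * N + m := by
      calc ∑ v ∈ Finset.range B, mult v
          = ∑ v ∈ Finset.range B, (Fβ v + Fγ v) := by
            apply Finset.sum_congr rfl; intro v _; rw [hmult' v]
        _ = (∑ v ∈ Finset.range B, Fβ v) + ∑ v ∈ Finset.range B, Fγ v :=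
            Finset.sum_add_distrib
        _ = 2 * N + m := by rw [hcardβ, hcardγ]; ring
    have h2 : ∑ v ∈ Finset.range B, mult v = d + t := by
      calc ∑ v ∈ Finset.range B, mult v
          = ∑ v ∈ Finset.range B,
              ((if v < d then 1 else 0) + (if v < t then 1 else 0)) := by
            apply Finset.sum_congr rfl; intro v _; rw [hmform v]
        _ = (∑ v ∈ Finset.range B, (if v < d then 1 else 0)) +
              ∑ v ∈ Finset.range B, (if v < t then 1 else 0) :=
            Finset.sum_add_distrib
        _ = d + t := by rw [hindic d (by omega), hindic t htB]
    omega
  -- weighted sum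
  have hweight : (∑ i, β i) + (∑ j, γ j)
      = (∑ v ∈ Finset.range d, v) + ∑ v ∈ Finset.range t, v := by
    have h1 : ∑ v ∈ Finset.range B, v * mult v = (∑ i, β i) + ∑ j, γ j := by
      calc ∑ v ∈ Finset.range B, v * mult v
          = ∑ v ∈ Finset.range B, (v * Fβ v + v * Fγ v) := by
            apply Finset.sum_congr rfl; intro v _; rw [hmult' v]; ring
        _ = (∑ v ∈ Finset.range B, v * Fβ v) + ∑ v ∈ Finset.range B, v * Fγ v :=
            Finset.sum_add_distrib
        _ = (∑ i, β i) + ∑ j, γ j := by rw [hsumβ, hsumγ]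
    have h2 : ∑ v ∈ Finset.range B, v * mult v
        = (∑ v ∈ Finset.range d, v) + ∑ v ∈ Finset.range t, v := by
      calc ∑ v ∈ Finset.range B, v * mult v
          = ∑ v ∈ Finset.range B,
              ((if v < d then v else 0) + (if v < t then v else 0)) := by
            apply Finset.sum_congr rfl; intro v _; rw [hmform v]
            split <;> split <;> ring
        _ = (∑ v ∈ Finset.range B, (if v < d then v else 0)) +
              ∑ v ∈ Finset.range B, (if v < t then v else 0) :=
            Finset.sum_add_distrib
        _ = (∑ v ∈ Finset.range d, v) + ∑ v ∈ Finset.range t, v := by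
            rw [hindic' d (by omega), hindic' t htB]
    omega
  -- d ≤ N
  have hdN : d ≤ N := by
    have h1 : ∀ v ∈ Finset.range d, 1 ≤ Fγ v := by
      intro v hv
      simp only [Finset.mem_range] at hv
      have := (h2iff v).mpr hv
      rw [hmult' v] at this
      have := hβ1 v
      omega
    have h2 : d ≤ ∑ v ∈ Finset.range d, Fγ v := by
      calc d = ∑ _v ∈ Finset.range d, 1 := by simp
        _ ≤ ∑ v ∈ Finset.range d, Fγ v := Finset.sum_le_sum h1
    have h3 : ∑ v ∈ Finset.range d, Fγ v ≤ ∑ v ∈ Finset.range B, Fγ v := by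
      apply Finset.sum_le_sum_of_subset
      apply Finset.range_subset_range.mpr
      omega
    omega
  -- k = N - d
  have hcard2 : Nat.card {v : ℕ // mult v = 2} = d := by
    have e1 : {v : ℕ // mult v = 2} ≃ {v : ℕ // v < d} :=
      Equiv.subtypeEquivRight h2iff
    rw [Nat.card_congr e1, Nat.card_congr (Fin.equivSubtype (n := d)).symm,
      Nat.card_eq_fintype_card, Fintype.card_fin]
  have hkd : k = N - d := by rw [hk, hcard2]
  -- cast to ℤ and finish
  have hkZ : (k : ℤ) = (N : ℤ) - d := by
    rw [hkd]
    exact Nat.cast_sub hdN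
  have htZ : (t : ℤ) = 2 * (N : ℤ) + m - d := by
    have : (d : ℤ) + t = 2 * N + m := by exact_mod_cast htotal
    linarith
  have hSd := gauss_cast d
  have hSt := gauss_cast t
  have hC := choose_two_cast m
  have hweightZ : ((∑ i, β i : ℕ) : ℤ) + ((∑ j, γ j : ℕ) : ℤ)
      = ((∑ v ∈ Finset.range d, v : ℕ) : ℤ) + ((∑ v ∈ Finset.range t, v : ℕ) : ℤ) := by
    exact_mod_cast hweight
  rw [htZ] at hSt
  have key : 2 * (n : ℤ) = 2 * (((N : ℤ) - d) * (((N : ℤ) - d) + m)) := by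
    linear_combination hSd + hSt - 2 * hn + 2 * hweightZ - hC
  have goalZ : (n : ℤ) = (k : ℤ) * ((k : ℤ) + m) := by
    rw [hkZ]
    linarith
  exact_mod_cast goalZ
end

section
/- Fix m ≥ 0, N ≥ 1, n ≥ 0 and a symbol S consisting of nonnegative integers 0 ≤ β_1 < ... < β_{N+m} and 0 ≤ γ_1 < ... < γ_N with Σ_i β_i + Σ_j γ_j = n + N² + N(m-1) + m(m-1)/2, such that each value occurs with multiplicity at most 2 in the combined multiset. Let k = N - #{values occurring with multiplicity 2}. Then k ≥ 0 and k(k+m) ≤ n. -/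
open scoped Classical

private lemma sum_lower' (s : Finset ℕ) : ∑ i ∈ Finset.range s.card, i ≤ ∑ x ∈ s, x := by
  induction s using Finset.induction_on_max with
  | empty => simp
  | insert a s ha ih =>
    have hna : a ∉ s := fun h => lt_irrefl a (ha a h)
    rw [Finset.card_insert_of_notMem hna, Finset.sum_insert hna, Finset.sum_range_succ]
    have hca : s.card ≤ a := by
      have : s ⊆ Finset.range a := fun x hx => Finset.mem_range.2 (ha x hx)
      simpa using Finset.card_le_card this
    omega

private lemma two_choose (m : ℕ) : 2 * m.choose 2 = m * (m - 1) := by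
  cases m with
  | zero => rfl
  | succ p =>
    rw [Nat.choose_two_right, Nat.mul_div_cancel']
    simpa [mul_comm] using (Nat.even_mul_succ_self p).two_dvd

private lemma two_choose' (m : ℕ) : 2 * (m.choose 2 : ℤ) = m * (m - 1) := by
  cases m with
  | zero => simp
  | succ p =>
    have h := two_choose (p + 1)
    rw [Nat.succ_sub_one] at h
    have h2 : ((2 * (p + 1).choose 2 : ℕ) : ℤ) = (((p + 1) * p : ℕ) : ℤ) := by
      exact_mod_cast congrArg (Nat.cast : ℕ → ℤ) h
    push_cast at h2
    push_cast
    linarith [h2]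

private lemma two_sum_ge (s : Finset ℕ) :
    ((s.card : ℤ)) * (s.card - 1) ≤ 2 * ∑ x ∈ s, (x : ℤ) := by
  have h' : ((∑ i ∈ Finset.range s.card, i : ℕ) : ℤ) ≤ ((∑ x ∈ s, x : ℕ) : ℤ) := by
    exact_mod_cast sum_lower' s
  push_cast at h'
  have h2 := Finset.sum_range_id_mul_two s.card
  rcases Nat.eq_zero_or_pos s.card with h0 | h0
  · simp [h0]; positivity
  · have h2' : (∑ i ∈ Finset.range s.card, (i : ℤ)) * 2 = (s.card : ℤ) * (s.card - 1) := by
      have hc := congrArg (Nat.cast : ℕ → ℤ) h2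
      push_cast [Nat.cast_sub h0] at hc
      exact hc
    linarith

private lemma filter_card_image {t : ℕ} (f : Fin t → ℕ) (hf : Function.Injective f) (v : ℕ) :
    (Finset.univ.filter (fun i => f i = v)).card =
      if v ∈ Finset.image f Finset.univ then 1 else 0 := by
  split_ifs with h
  · obtain ⟨i, -, hi⟩ := Finset.mem_image.1 h
    have : Finset.univ.filter (fun j => f j = v) = {i} := by
      ext j
      simp [← hi, hf.eq_iff]
    rw [this, Finset.card_singleton]
  · have : Finset.univ.filter (fun j => f j = v) = ∅ :=
      Finset.filter_eq_empty_iff.2 (fun i _ hi => h (Finset.mem_image.2 ⟨i, Finset.mem_univ i, hi⟩))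
    rw [this, Finset.card_empty]

/-- For any symbol (`β` strictly increasing of length `N + m`, `γ` strictly increasing of
length `N`, every value of combined multiplicity at most `2`) with
`Σβ + Σγ = n + N² + N(m-1) + C(m,2)`, setting `k = N - #{v : mult v = 2}` one has `k ≥ 0`
and `k(k+m) ≤ n`. -/
theorem symbol_size_lower_bound
    (m N : ℕ) (hN : 1 ≤ N) (n : ℕ)
    (β : Fin (N + m) → ℕ) (γ : Fin N → ℕ)
    (hβ : StrictMono β) (hγ : StrictMono γ)
    (mult : ℕ → ℕ)
    (hmult : ∀ v, mult v = (Finset.univ.filter (fun i => β i = v)).card +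
      (Finset.univ.filter (fun j => γ j = v)).card)
    (hmult2 : ∀ v, mult v ≤ 2)
    (k : ℕ) (hk : k = N - Nat.card {v : ℕ // mult v = 2})
    (hn : ((∑ i, β i : ℕ) : ℤ) + (∑ j, γ j : ℕ) =
      (n : ℤ) + (N : ℤ) ^ 2 + (N : ℤ) * ((m : ℤ) - 1) + (Nat.choose m 2 : ℤ)) :
    0 ≤ k ∧ k * (k + m) ≤ n := by
  refine ⟨Nat.zero_le _, ?_⟩
  set A : Finset ℕ := Finset.image β Finset.univ with hAdef
  set B : Finset ℕ := Finset.image γ Finset.univ with hBdef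
  have hA : A.card = N + m := by
    rw [hAdef, Finset.card_image_of_injective _ hβ.injective, Finset.card_univ, Fintype.card_fin]
  have hB : B.card = N := by
    rw [hBdef, Finset.card_image_of_injective _ hγ.injective, Finset.card_univ, Fintype.card_fin]
  have hm2 : ∀ v, mult v = 2 ↔ v ∈ A ∩ B := by
    intro v
    rw [hmult v, filter_card_image β hβ.injective v, filter_card_image γ hγ.injective v,
      Finset.mem_inter]
    split_ifs with h1 h2 h2 <;> simp [h1, h2, hAdef, hBdef]
  have hset : {v : ℕ | mult v = 2} = (↑(A ∩ B) : Set ℕ) := Set.ext fun v => by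
    simpa using hm2 v
  have hd : Nat.card {v : ℕ // mult v = 2} = (A ∩ B).card := by
    have h1 : Nat.card {v : ℕ // mult v = 2} = Nat.card (↑(A ∩ B) : Set ℕ) :=
      Nat.card_congr (Equiv.setCongr hset)
    rw [h1, Nat.card_coe_set_eq, Set.ncard_coe_finset]
  set d := (A ∩ B).card with hddef
  have hdN : d ≤ N := by
    rw [← hB]; exact Finset.card_le_card Finset.inter_subset_right
  have hkd : (k : ℤ) = (N : ℤ) - d := by
    rw [hk, hd]
    push_cast [Nat.cast_sub hdN]
    ring
  have hu : (A ∪ B).card + d = (N + m) + N := by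
    rw [hddef, Finset.card_union_add_card_inter, hA, hB]
  have e1 : ∑ v ∈ A, (v : ℤ) = ((∑ i, β i : ℕ) : ℤ) := by
    rw [hAdef, Finset.sum_image (fun i _ j _ h => hβ.injective h)]
    push_cast
    rfl
  have e2 : ∑ v ∈ B, (v : ℤ) = ((∑ j, γ j : ℕ) : ℤ) := by
    rw [hBdef, Finset.sum_image (fun i _ j _ h => hγ.injective h)]
    push_cast
    rfl
  have hsum : (∑ v ∈ A ∪ B, (v : ℤ)) + (∑ v ∈ A ∩ B, (v : ℤ)) =
      (n : ℤ) + (N : ℤ) ^ 2 + (N : ℤ) * ((m : ℤ) - 1) + (Nat.choose m 2 : ℤ) := by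
    rw [Finset.sum_union_inter, e1, e2]; exact hn
  have b1 := two_sum_ge (A ∪ B)
  have b2 := two_sum_ge (A ∩ B)
  have hu' : ((A ∪ B).card : ℤ) = (N : ℤ) + m + N - d := by
    have := congrArg (Nat.cast : ℕ → ℤ) hu
    push_cast at this
    linarith
  rw [hu'] at b1
  rw [← hddef] at b2
  have hch := two_choose' m
  have goal' : (k : ℤ) * ((k : ℤ) + m) ≤ n := by nlinarith [b1, b2, hsum, hkd, hch]
  exact_mod_cast goal'
end
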